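/- arXiv:2304.05235 — 7 statements merged into one kernel-verified Lean document; each statement's English description precedes it below -/
import Mathlib

section
/- Let (S, +, ∘) be a dual weak brace, z ∈ D_r(S), and r_z the deformed solution r_z(a,b) = (-a∘z + a∘b∘z, (-a∘z + a∘b∘z)⁻ ∘ a∘b). Define ř_{z⁻}(a,b) = (a∘b - a∘z⁻ + z⁻, (a∘b - a∘z⁻ + z⁻)⁻ ∘ a∘b). Then r_z ∘ ř_{z⁻} ∘ r_z = r_z, ř_{z⁻} ∘ r_z ∘ ř_{z⁻} = ř_{z⁻}, and r_z ∘ ř_{z⁻} = ř_{z⁻} ∘ r_z; i.e., r_z is a completely regular element of Map(S × S). -/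
/-- A dual weak (left) brace: `(S,+)` and `(S,∘)` are inverse semigroups, `(S,∘)` is
Clifford, with `a ∘ (b + c) = a ∘ b - a + a ∘ c` and `a ∘ a⁻ = -a + a`. -/
structure DualWeakBrace (S : Type*) where
  add : S → S → S
  mul : S → S → S
  neg : S → S
  inv : S → S
  add_assoc : ∀ a b c, add (add a b) c = add a (add b c)
  mul_assoc : ∀ a b c, mul (mul a b) c = mul a (mul b c)
  add_reg : ∀ a, add (add a (neg a)) a = a
  neg_reg : ∀ a, add (add (neg a) a) (neg a) = neg a
  neg_unique : ∀ a b, add (add a b) a = a → add (add b a) b = b → b = neg a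
  mul_reg : ∀ a, mul (mul a (inv a)) a = a
  inv_reg : ∀ a, mul (mul (inv a) a) (inv a) = inv a
  inv_unique : ∀ a b, mul (mul a b) a = a → mul (mul b a) b = b → b = inv a
  clifford : ∀ a, mul a (inv a) = mul (inv a) a
  dist : ∀ a b c, mul a (add b c) = add (add (mul a b) (neg a)) (mul a c)
  weak : ∀ a, mul a (inv a) = add (neg a) a

/-- The right distributor `D_r(S)`. -/
def DualWeakBrace.Dr {S : Type*} (B : DualWeakBrace S) : Set S :=
  {z | ∀ a b, B.mul (B.add a b) z = B.add (B.add (B.mul a z) (B.neg z)) (B.mul b z)}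

/-- `σ_a^z(b) = -a∘z + a∘b∘z`. -/
def DualWeakBrace.sigma {S : Type*} (B : DualWeakBrace S) (z a b : S) : S :=
  B.add (B.neg (B.mul a z)) (B.mul (B.mul a b) z)

/-- `τ_b^z(a) = (σ_a^z(b))⁻ ∘ a ∘ b`. -/
def DualWeakBrace.tau {S : Type*} (B : DualWeakBrace S) (z b a : S) : S :=
  B.mul (B.mul (B.inv (B.sigma z a b)) a) b

/-- The deformed map `r_z`. -/
def DualWeakBrace.rz {S : Type*} (B : DualWeakBrace S) (z : S) : S × S → S × S :=
  fun p => (B.sigma z p.1 p.2, B.tau z p.2 p.1)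

/-- The map `ř_w(a,b) = (a∘b - a∘w + w, (a∘b - a∘w + w)⁻ ∘ a ∘ b)`. -/
def DualWeakBrace.rcheck {S : Type*} (B : DualWeakBrace S) (w : S) : S × S → S × S :=
  fun p =>
    (B.add (B.add (B.mul p.1 p.2) (B.neg (B.mul p.1 w))) w,
     B.mul (B.mul (B.inv (B.add (B.add (B.mul p.1 p.2) (B.neg (B.mul p.1 w))) w)) p.1) p.2)


namespace DWBAux

structure InvSg (S : Type*) where
  op : S → S → S
  iv : S → S
  assoc : ∀ a b c, op (op a b) c = op a (op b c)
  reg : ∀ a, op (op a (iv a)) a = a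
  ireg : ∀ a, op (op (iv a) a) (iv a) = iv a
  uniq : ∀ a b, op (op a b) a = a → op (op b a) b = b → b = iv a

namespace InvSg

variable {S : Type*} (M : InvSg S)

local infixl:70 " ⬝ " => M.op
local postfix:max "ᵛ" => M.iv

theorem iv_iv (a : S) : aᵛᵛ = a := (M.uniq aᵛ a (M.ireg a) (M.reg a)).symm

theorem idem_iv_self {e : S} (he : e ⬝ e = e) : eᵛ = e := by
  have h : e ⬝ e ⬝ e = e := by rw [he, he]
  exact (M.uniq e e h h).symm

theorem idem_aa' (a : S) : (a ⬝ aᵛ) ⬝ (a ⬝ aᵛ) = a ⬝ aᵛ := by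
  have : (a ⬝ aᵛ) ⬝ (a ⬝ aᵛ) = (a ⬝ aᵛ ⬝ a) ⬝ aᵛ := by simp only [M.assoc]
  rw [this, M.reg]

theorem idem_a'a (a : S) : (aᵛ ⬝ a) ⬝ (aᵛ ⬝ a) = aᵛ ⬝ a := by
  have : (aᵛ ⬝ a) ⬝ (aᵛ ⬝ a) = (aᵛ ⬝ a ⬝ aᵛ) ⬝ a := by simp only [M.assoc]
  rw [this, M.ireg]

theorem idem_op {e f : S} (he : e ⬝ e = e) (hf : f ⬝ f = f) :
    (e ⬝ f) ⬝ (e ⬝ f) = e ⬝ f := by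
  set x := (e ⬝ f)ᵛ with hxdef
  have hx1 : e ⬝ f ⬝ x ⬝ (e ⬝ f) = e ⬝ f := M.reg (e ⬝ f)
  have hx2 : x ⬝ (e ⬝ f) ⬝ x = x := M.ireg (e ⬝ f)
  have hyidem : (f ⬝ x ⬝ e) ⬝ (f ⬝ x ⬝ e) = f ⬝ x ⬝ e := by
    calc (f ⬝ x ⬝ e) ⬝ (f ⬝ x ⬝ e) = f ⬝ (x ⬝ (e ⬝ f) ⬝ x) ⬝ e := by simp only [M.assoc]
    _ = f ⬝ x ⬝ e := by rw [hx2]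
  have hyinv1 : (e ⬝ f) ⬝ (f ⬝ x ⬝ e) ⬝ (e ⬝ f) = e ⬝ f := by
    calc (e ⬝ f) ⬝ (f ⬝ x ⬝ e) ⬝ (e ⬝ f)
        = e ⬝ (f ⬝ f) ⬝ (x ⬝ (e ⬝ e) ⬝ f) := by simp only [M.assoc]
    _ = e ⬝ f ⬝ (x ⬝ e ⬝ f) := by rw [hf, he]
    _ = e ⬝ f ⬝ x ⬝ (e ⬝ f) := by simp only [M.assoc]
    _ = e ⬝ f := hx1
  have hyinv2 : (f ⬝ x ⬝ e) ⬝ (e ⬝ f) ⬝ (f ⬝ x ⬝ e) = f ⬝ x ⬝ e := by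
    calc (f ⬝ x ⬝ e) ⬝ (e ⬝ f) ⬝ (f ⬝ x ⬝ e)
        = f ⬝ (x ⬝ ((e ⬝ e) ⬝ ((f ⬝ f) ⬝ (x ⬝ e)))) := by simp only [M.assoc]
    _ = f ⬝ (x ⬝ (e ⬝ (f ⬝ (x ⬝ e)))) := by rw [hf, he]
    _ = f ⬝ (x ⬝ (e ⬝ f) ⬝ x) ⬝ e := by simp only [M.assoc]
    _ = f ⬝ x ⬝ e := by rw [hx2]
  have hxy : f ⬝ x ⬝ e = x := M.uniq (e ⬝ f) (f ⬝ x ⬝ e) hyinv1 hyinv2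
  have hxidem : x ⬝ x = x := by rw [← hxy]; exact hyidem
  have hefx : e ⬝ f = xᵛ := M.uniq x (e ⬝ f) hx2 hx1
  rw [hefx, idem_iv_self M hxidem] at *
  exact hxidem

theorem idem_comm {e f : S} (he : e ⬝ e = e) (hf : f ⬝ f = f) :
    e ⬝ f = f ⬝ e := by
  have hef : (e ⬝ f) ⬝ (e ⬝ f) = e ⬝ f := idem_op M he hf
  have hfe : (f ⬝ e) ⬝ (f ⬝ e) = f ⬝ e := idem_op M hf he
  have h1 : (e ⬝ f) ⬝ (f ⬝ e) ⬝ (e ⬝ f) = e ⬝ f := by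
    calc (e ⬝ f) ⬝ (f ⬝ e) ⬝ (e ⬝ f) = e ⬝ (f ⬝ f) ⬝ ((e ⬝ e) ⬝ f) := by
          simp only [M.assoc]
    _ = e ⬝ f ⬝ (e ⬝ f) := by rw [hf, he]
    _ = e ⬝ f := hef
  have h2 : (f ⬝ e) ⬝ (e ⬝ f) ⬝ (f ⬝ e) = f ⬝ e := by
    calc (f ⬝ e) ⬝ (e ⬝ f) ⬝ (f ⬝ e) = f ⬝ (e ⬝ e) ⬝ ((f ⬝ f) ⬝ e) := by
          simp only [M.assoc]
    _ = f ⬝ e ⬝ (f ⬝ e) := by rw [hf, he]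
    _ = f ⬝ e := hfe
  have := M.uniq (e ⬝ f) (f ⬝ e) h1 h2
  rw [this, idem_iv_self M hef]

theorem op_iv_rev (a b : S) : (a ⬝ b)ᵛ = bᵛ ⬝ aᵛ := by
  have hcomm : (b ⬝ bᵛ) ⬝ (aᵛ ⬝ a) = (aᵛ ⬝ a) ⬝ (b ⬝ bᵛ) :=
    idem_comm M (idem_aa' M b) (idem_a'a M a)
  have h1 : (a ⬝ b) ⬝ (bᵛ ⬝ aᵛ) ⬝ (a ⬝ b) = a ⬝ b := by
    calc (a ⬝ b) ⬝ (bᵛ ⬝ aᵛ) ⬝ (a ⬝ b)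
        = a ⬝ ((b ⬝ bᵛ) ⬝ (aᵛ ⬝ a)) ⬝ b := by simp only [M.assoc]
    _ = a ⬝ ((aᵛ ⬝ a) ⬝ (b ⬝ bᵛ)) ⬝ b := by rw [hcomm]
    _ = (a ⬝ aᵛ ⬝ a) ⬝ (b ⬝ bᵛ ⬝ b) := by simp only [M.assoc]
    _ = a ⬝ b := by rw [M.reg, M.reg]
  have h2 : (bᵛ ⬝ aᵛ) ⬝ (a ⬝ b) ⬝ (bᵛ ⬝ aᵛ) = bᵛ ⬝ aᵛ := by
    calc (bᵛ ⬝ aᵛ) ⬝ (a ⬝ b) ⬝ (bᵛ ⬝ aᵛ)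
        = bᵛ ⬝ ((aᵛ ⬝ a) ⬝ (b ⬝ bᵛ)) ⬝ aᵛ := by simp only [M.assoc]
    _ = bᵛ ⬝ ((b ⬝ bᵛ) ⬝ (aᵛ ⬝ a)) ⬝ aᵛ := by rw [← hcomm]
    _ = (bᵛ ⬝ b ⬝ bᵛ) ⬝ (aᵛ ⬝ a ⬝ aᵛ) := by simp only [M.assoc]
    _ = bᵛ ⬝ aᵛ := by rw [M.ireg, M.ireg]
  exact (M.uniq (a ⬝ b) (bᵛ ⬝ aᵛ) h1 h2).symm

theorem idem_central (hc : ∀ a : S, a ⬝ aᵛ = aᵛ ⬝ a) {e : S} (he : e ⬝ e = e)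
    (a : S) : e ⬝ a = a ⬝ e := by
  have hev : eᵛ = e := idem_iv_self M he
  have haa : a ⬝ a ⬝ aᵛ = a := by
    calc a ⬝ a ⬝ aᵛ = a ⬝ (a ⬝ aᵛ) := by simp only [M.assoc]
    _ = a ⬝ (aᵛ ⬝ a) := by rw [hc]
    _ = a ⬝ aᵛ ⬝ a := by simp only [M.assoc]
    _ = a := M.reg a
  have hcomm : e ⬝ (a ⬝ aᵛ) = (a ⬝ aᵛ) ⬝ e := idem_comm M he (idem_aa' M a)
  have hii : (a ⬝ aᵛ) ⬝ e = (aᵛ ⬝ e) ⬝ a := by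
    have h := hc (e ⬝ a)
    rw [op_iv_rev M e a, hev] at h
    -- h : (e ⬝ a) ⬝ (aᵛ ⬝ e) = (aᵛ ⬝ e) ⬝ (e ⬝ a)
    calc (a ⬝ aᵛ) ⬝ e = (a ⬝ aᵛ) ⬝ (e ⬝ e) := by rw [he]
    _ = ((a ⬝ aᵛ) ⬝ e) ⬝ e := by simp only [M.assoc]
    _ = (e ⬝ (a ⬝ aᵛ)) ⬝ e := by rw [← hcomm]
    _ = (e ⬝ a) ⬝ (aᵛ ⬝ e) := by simp only [M.assoc]
    _ = (aᵛ ⬝ e) ⬝ (e ⬝ a) := h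
    _ = aᵛ ⬝ (e ⬝ e) ⬝ a := by simp only [M.assoc]
    _ = (aᵛ ⬝ e) ⬝ a := by rw [he]
  calc e ⬝ a = e ⬝ ((a ⬝ aᵛ) ⬝ a) := by rw [M.reg]
  _ = (e ⬝ (a ⬝ aᵛ)) ⬝ a := by simp only [M.assoc]
  _ = ((a ⬝ aᵛ) ⬝ e) ⬝ a := by rw [hcomm]
  _ = a ⬝ ((aᵛ ⬝ e) ⬝ a) := by simp only [M.assoc]
  _ = a ⬝ ((a ⬝ aᵛ) ⬝ e) := by rw [← hii]
  _ = (a ⬝ a ⬝ aᵛ) ⬝ e := by simp only [M.assoc]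
  _ = a ⬝ e := by rw [haa]

end InvSg
end DWBAux
namespace DWBAux
open InvSg

variable {S : Type*} (B : DualWeakBrace S)

def aS : InvSg S := ⟨B.add, B.neg, B.add_assoc, B.add_reg, B.neg_reg, B.neg_unique⟩
def mS : InvSg S := ⟨B.mul, B.inv, B.mul_assoc, B.mul_reg, B.inv_reg, B.inv_unique⟩

section Brace

local infixl:65 " ⊹ " => B.add
local infixl:70 " ⬝ " => B.mul
local prefix:100 "∻" => B.neg
local postfix:max "ᵛ" => B.inv

theorem nn (a : S) : ∻∻a = a := iv_iv (aS B) a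
theorem ii (a : S) : aᵛᵛ = a := iv_iv (mS B) a
theorem nrev (a b : S) : ∻(a ⊹ b) = ∻b ⊹ ∻a := op_iv_rev (aS B) a b
theorem irev (a b : S) : (a ⬝ b)ᵛ = bᵛ ⬝ aᵛ := op_iv_rev (mS B) a b

theorem regA (a : S) : a ⊹ ∻a ⊹ a = a := B.add_reg a
theorem regA' (a : S) : a ⊹ (∻a ⊹ a) = a := by rw [← B.add_assoc]; exact B.add_reg a
theorem regM' (a : S) : a ⬝ (aᵛ ⬝ a) = a := by rw [← B.mul_assoc]; exact B.mul_reg a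

theorem weak' (a : S) : a ⬝ aᵛ = ∻a ⊹ a := B.weak a
theorem weak2 (a : S) : aᵛ ⬝ a = ∻a ⊹ a := by rw [← B.clifford]; exact B.weak a

theorem aidem_neg {e : S} (he : e ⊹ e = e) : ∻e = e :=
  ((aS B).uniq e e (by show e ⊹ e ⊹ e = e; rw [he, he])
    (by show e ⊹ e ⊹ e = e; rw [he, he])).symm

theorem aidem_midem {e : S} (he : e ⊹ e = e) : e ⬝ e = e := by
  have h : e ⬝ eᵛ = e := by rw [weak' B, aidem_neg B he, he]
  have h2 := idem_aa' (mS B) e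
  calc e ⬝ e = (e ⬝ eᵛ) ⬝ (e ⬝ eᵛ) := by rw [h]
  _ = e ⬝ eᵛ := h2
  _ = e := h

theorem midem_inv {e : S} (he : e ⬝ e = e) : eᵛ = e := idem_iv_self (mS B) he

theorem midem_aidem {e : S} (he : e ⬝ e = e) : e ⊹ e = e := by
  have h : e = ∻e ⊹ e := by rw [← weak' B, midem_inv B he, he]
  calc e ⊹ e = e ⊹ (∻e ⊹ e) := by rw [← h]
  _ = e := regA' B e

theorem midem_neg {e : S} (he : e ⬝ e = e) : ∻e = e := aidem_neg B (midem_aidem B he)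

theorem mcen {e : S} (he : e ⬝ e = e) (x : S) : e ⬝ x = x ⬝ e :=
  idem_central (mS B) B.clifford he x

theorem acomm {e f : S} (he : e ⊹ e = e) (hf : f ⊹ f = f) : e ⊹ f = f ⊹ e :=
  idem_comm (aS B) he hf

theorem mcomm {e f : S} (he : e ⬝ e = e) (hf : f ⬝ f = f) : e ⬝ f = f ⬝ e :=
  idem_comm (mS B) he hf

theorem midem_mul {e f : S} (he : e ⬝ e = e) (hf : f ⬝ f = f) :
    (e ⬝ f) ⬝ (e ⬝ f) = e ⬝ f := idem_op (mS B) he hf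

theorem aidem_add {e f : S} (he : e ⊹ e = e) (hf : f ⊹ f = f) :
    (e ⊹ f) ⊹ (e ⊹ f) = e ⊹ f := idem_op (aS B) he hf

/-- swap two additive idempotents across a right-assoc context -/
theorem aswap {e f : S} (he : e ⊹ e = e) (hf : f ⊹ f = f) (t : S) :
    e ⊹ (f ⊹ t) = f ⊹ (e ⊹ t) := by
  rw [← B.add_assoc, acomm B he hf, B.add_assoc]

theorem acontract {e : S} (he : e ⊹ e = e) (t : S) : e ⊹ (e ⊹ t) = e ⊹ t := by
  rw [← B.add_assoc, he]

theorem ff_idem (a : S) : (a ⊹ ∻a) ⊹ (a ⊹ ∻a) = a ⊹ ∻a := by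
  calc (a ⊹ ∻a) ⊹ (a ⊹ ∻a) = (a ⊹ (∻a ⊹ a)) ⊹ ∻a := by simp only [B.add_assoc]
  _ = a ⊹ ∻a := by rw [regA' B]

theorem ee_idem (a : S) : (∻a ⊹ a) ⊹ (∻a ⊹ a) = ∻a ⊹ a := by
  calc (∻a ⊹ a) ⊹ (∻a ⊹ a) = (∻a ⊹ a ⊹ ∻a) ⊹ a := by simp only [B.add_assoc]
  _ = ∻a ⊹ a := by rw [B.neg_reg a]

theorem lam_neg (a b : S) : ∻a ⊹ a ⬝ ∻b = ∻(∻a ⊹ a ⬝ b) := by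
  have hu1 : (∻a ⊹ a ⬝ b) ⊹ (∻a ⊹ a ⬝ ∻b) ⊹ (∻a ⊹ a ⬝ b) = ∻a ⊹ a ⬝ b := by
    have h1 : (∻a ⊹ a ⬝ b) ⊹ (∻a ⊹ a ⬝ ∻b) = ∻a ⊹ a ⬝ (b ⊹ ∻b) := by
      calc (∻a ⊹ a ⬝ b) ⊹ (∻a ⊹ a ⬝ ∻b) = ∻a ⊹ (a ⬝ b ⊹ ∻a ⊹ a ⬝ ∻b) := by
            simp only [B.add_assoc]
      _ = ∻a ⊹ a ⬝ (b ⊹ ∻b) := by rw [← B.dist]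
    rw [h1]
    calc (∻a ⊹ a ⬝ (b ⊹ ∻b)) ⊹ (∻a ⊹ a ⬝ b) = ∻a ⊹ (a ⬝ (b ⊹ ∻b) ⊹ ∻a ⊹ a ⬝ b) := by
          simp only [B.add_assoc]
    _ = ∻a ⊹ a ⬝ (b ⊹ ∻b ⊹ b) := by rw [← B.dist]
    _ = ∻a ⊹ a ⬝ b := by rw [B.add_reg]
  have hu2 : (∻a ⊹ a ⬝ ∻b) ⊹ (∻a ⊹ a ⬝ b) ⊹ (∻a ⊹ a ⬝ ∻b) = ∻a ⊹ a ⬝ ∻b := by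
    have h1 : (∻a ⊹ a ⬝ ∻b) ⊹ (∻a ⊹ a ⬝ b) = ∻a ⊹ a ⬝ (∻b ⊹ b) := by
      calc (∻a ⊹ a ⬝ ∻b) ⊹ (∻a ⊹ a ⬝ b) = ∻a ⊹ (a ⬝ ∻b ⊹ ∻a ⊹ a ⬝ b) := by
            simp only [B.add_assoc]
      _ = ∻a ⊹ a ⬝ (∻b ⊹ b) := by rw [← B.dist]
    rw [h1]
    calc (∻a ⊹ a ⬝ (∻b ⊹ b)) ⊹ (∻a ⊹ a ⬝ ∻b) = ∻a ⊹ (a ⬝ (∻b ⊹ b) ⊹ ∻a ⊹ a ⬝ ∻b) := by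
          simp only [B.add_assoc]
    _ = ∻a ⊹ a ⬝ (∻b ⊹ b ⊹ ∻b) := by rw [← B.dist]
    _ = ∻a ⊹ a ⬝ ∻b := by rw [B.neg_reg]
  exact B.neg_unique _ _ hu1 hu2

theorem nprim (a b : S) : ∻(a ⬝ b) ⊹ a = ∻a ⊹ a ⬝ ∻b := by
  rw [lam_neg B, nrev B, nn B]

theorem star (a b : S) : a ⬝ b ⊹ ∻(a ⬝ b) ⊹ a ⊹ ∻a ⊹ a ⬝ b = a ⬝ b := by
  have s1 : a ⬝ b ⊹ ∻(a ⬝ b) ⊹ a = a ⬝ (b ⊹ ∻b) := by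
    calc a ⬝ b ⊹ ∻(a ⬝ b) ⊹ a = a ⬝ b ⊹ (∻(a ⬝ b) ⊹ a) := by simp only [B.add_assoc]
    _ = a ⬝ b ⊹ (∻a ⊹ a ⬝ ∻b) := by rw [nprim B]
    _ = a ⬝ b ⊹ ∻a ⊹ a ⬝ ∻b := by simp only [B.add_assoc]
    _ = a ⬝ (b ⊹ ∻b) := by rw [← B.dist]
  calc a ⬝ b ⊹ ∻(a ⬝ b) ⊹ a ⊹ ∻a ⊹ a ⬝ b = (a ⬝ b ⊹ ∻(a ⬝ b) ⊹ a) ⊹ ∻a ⊹ a ⬝ b := by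
        simp only [B.add_assoc]
  _ = a ⬝ (b ⊹ ∻b) ⊹ ∻a ⊹ a ⬝ b := by rw [s1]
  _ = a ⬝ (b ⊹ ∻b ⊹ b) := by rw [← B.dist]
  _ = a ⬝ b := by rw [B.add_reg]

theorem ff_absorb (a b : S) :
    (a ⬝ b ⊹ ∻(a ⬝ b)) ⊹ (a ⊹ ∻a) = a ⬝ b ⊹ ∻(a ⬝ b) := by
  have h1 : (a ⬝ b ⊹ ∻(a ⬝ b)) ⊹ (a ⊹ ∻a) ⊹ a ⬝ b = a ⬝ b := by
    calc (a ⬝ b ⊹ ∻(a ⬝ b)) ⊹ (a ⊹ ∻a) ⊹ a ⬝ b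
        = a ⬝ b ⊹ ∻(a ⬝ b) ⊹ a ⊹ ∻a ⊹ a ⬝ b := by simp only [B.add_assoc]
    _ = a ⬝ b := star B a b
  have h2 : (a ⬝ b ⊹ ∻(a ⬝ b)) ⊹ (a ⊹ ∻a) ⊹ (a ⬝ b ⊹ ∻(a ⬝ b))
      = a ⬝ b ⊹ ∻(a ⬝ b) := by
    calc (a ⬝ b ⊹ ∻(a ⬝ b)) ⊹ (a ⊹ ∻a) ⊹ (a ⬝ b ⊹ ∻(a ⬝ b))
        = ((a ⬝ b ⊹ ∻(a ⬝ b)) ⊹ (a ⊹ ∻a) ⊹ a ⬝ b) ⊹ ∻(a ⬝ b) := by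
          simp only [B.add_assoc]
    _ = a ⬝ b ⊹ ∻(a ⬝ b) := by rw [h1]
  calc (a ⬝ b ⊹ ∻(a ⬝ b)) ⊹ (a ⊹ ∻a)
      = (a ⬝ b ⊹ ∻(a ⬝ b)) ⊹ (a ⬝ b ⊹ ∻(a ⬝ b)) ⊹ (a ⊹ ∻a) := by
        rw [ff_idem B (a ⬝ b)]
  _ = (a ⬝ b ⊹ ∻(a ⬝ b)) ⊹ ((a ⬝ b ⊹ ∻(a ⬝ b)) ⊹ (a ⊹ ∻a)) := by
        simp only [B.add_assoc]
  _ = (a ⬝ b ⊹ ∻(a ⬝ b)) ⊹ ((a ⊹ ∻a) ⊹ (a ⬝ b ⊹ ∻(a ⬝ b))) := by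
        rw [acomm B (ff_idem B (a ⬝ b)) (ff_idem B a)]
  _ = (a ⬝ b ⊹ ∻(a ⬝ b)) ⊹ (a ⊹ ∻a) ⊹ (a ⬝ b ⊹ ∻(a ⬝ b)) := by
        simp only [B.add_assoc]
  _ = a ⬝ b ⊹ ∻(a ⬝ b) := h2

/-- P3' : `f_a ⊹ a⬝b = a⬝b` -/
theorem ffL (a b : S) : (a ⊹ ∻a) ⊹ a ⬝ b = a ⬝ b := by
  calc (a ⊹ ∻a) ⊹ a ⬝ b = (a ⊹ ∻a) ⊹ (a ⬝ b ⊹ ∻(a ⬝ b) ⊹ a ⬝ b) := by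
        rw [regA B (a ⬝ b)]
  _ = (a ⊹ ∻a) ⊹ (a ⬝ b ⊹ ∻(a ⬝ b)) ⊹ a ⬝ b := by simp only [B.add_assoc]
  _ = (a ⬝ b ⊹ ∻(a ⬝ b)) ⊹ (a ⊹ ∻a) ⊹ a ⬝ b := by
        rw [acomm B (ff_idem B a) (ff_idem B (a ⬝ b))]
  _ = ((a ⬝ b ⊹ ∻(a ⬝ b)) ⊹ (a ⊹ ∻a)) ⊹ a ⬝ b := by simp only [B.add_assoc]
  _ = (a ⬝ b ⊹ ∻(a ⬝ b)) ⊹ a ⬝ b := by rw [ff_absorb B]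
  _ = a ⬝ b := regA B (a ⬝ b)

/-- P3 : `a ⊹ λ_a(b) = a⬝b` -/
theorem p3 (a b : S) : a ⊹ (∻a ⊹ a ⬝ b) = a ⬝ b := by
  calc a ⊹ (∻a ⊹ a ⬝ b) = (a ⊹ ∻a) ⊹ a ⬝ b := by simp only [B.add_assoc]
  _ = a ⬝ b := ffL B a b

/-- L6' : `a⬝∻b = a ⊹ (∻(a⬝b) ⊹ a)` -/
theorem mul_neg (a b : S) : a ⬝ ∻b = a ⊹ (∻(a ⬝ b) ⊹ a) := by
  rw [nprim B, p3 B]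

end Brace
end DWBAux
namespace DWBAux
open InvSg

variable {S : Type*} (B : DualWeakBrace S)

section Brace2

local infixl:65 " ⊹ " => B.add
local infixl:70 " ⬝ " => B.mul
local prefix:100 "∻" => B.neg
local postfix:max "ᵛ" => B.inv

theorem cs1 (a : S) : a ⬝ ∻(aᵛ) = a ⊹ a := by
  rw [mul_neg B, weak' B, nrev B, nn B]
  -- a ⊹ ((∻a ⊹ a) ⊹ a)
  calc a ⊹ ((∻a ⊹ a) ⊹ a) = (a ⊹ (∻a ⊹ a)) ⊹ a := by simp only [B.add_assoc]
  _ = a ⊹ a := by rw [regA' B]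

theorem eeInv (a : S) : ∻(aᵛ) ⊹ aᵛ = ∻a ⊹ a := by
  rw [← weak' B aᵛ, ii B, weak2 B]

theorem cs3 (a : S) : a = a ⊹ a ⊹ ∻a ⊹ (∻a ⊹ a) := by
  have h0 : a ⬝ (∻a ⊹ a) = a := by rw [← weak2 B, regM' B]
  calc a = a ⬝ (∻a ⊹ a) := h0.symm
  _ = a ⬝ (∻(aᵛ) ⊹ aᵛ) := by rw [eeInv B]
  _ = a ⬝ ∻(aᵛ) ⊹ ∻a ⊹ a ⬝ aᵛ := B.dist a (∻(aᵛ)) aᵛ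
  _ = a ⊹ a ⊹ ∻a ⊹ (∻a ⊹ a) := by rw [cs1 B, weak' B]

theorem cs4 (a : S) : a ⊹ a ⊹ ∻a = a := by
  have hv : a ⊹ a ⊹ ∻a = a ⊹ (a ⊹ ∻a) := by simp only [B.add_assoc]
  have h1 : a ⊹ (a ⊹ ∻a) ⊹ (a ⊹ ∻a) = a ⊹ (a ⊹ ∻a) := by
    calc a ⊹ (a ⊹ ∻a) ⊹ (a ⊹ ∻a) = a ⊹ ((a ⊹ ∻a) ⊹ (a ⊹ ∻a)) := by
          simp only [B.add_assoc]
    _ = a ⊹ (a ⊹ ∻a) := by rw [ff_idem B a]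
  have h2 : a ⊹ (a ⊹ ∻a) ⊹ (∻a ⊹ a) = a := by
    calc a ⊹ (a ⊹ ∻a) ⊹ (∻a ⊹ a) = a ⊹ a ⊹ ∻a ⊹ (∻a ⊹ a) := by
          simp only [B.add_assoc]
    _ = a := (cs3 B a).symm
  calc a ⊹ a ⊹ ∻a = a ⊹ (a ⊹ ∻a) := hv
  _ = (a ⊹ (a ⊹ ∻a) ⊹ (∻a ⊹ a)) ⊹ (a ⊹ ∻a) := by rw [h2]
  _ = a ⊹ (a ⊹ ∻a) ⊹ ((∻a ⊹ a) ⊹ (a ⊹ ∻a)) := by simp only [B.add_assoc]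
  _ = a ⊹ (a ⊹ ∻a) ⊹ ((a ⊹ ∻a) ⊹ (∻a ⊹ a)) := by
        rw [acomm B (ee_idem B a) (ff_idem B a)]
  _ = (a ⊹ (a ⊹ ∻a) ⊹ (a ⊹ ∻a)) ⊹ (∻a ⊹ a) := by simp only [B.add_assoc]
  _ = a ⊹ (a ⊹ ∻a) ⊹ (∻a ⊹ a) := by rw [h1]
  _ = a := h2

theorem cs5 (a : S) : (∻a ⊹ a) ⊹ (a ⊹ ∻a) = ∻a ⊹ a := by
  calc (∻a ⊹ a) ⊹ (a ⊹ ∻a) = ∻a ⊹ (a ⊹ a ⊹ ∻a) := by simp only [B.add_assoc]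
  _ = ∻a ⊹ a := by rw [cs4 B a]

/-- `(S,+)` is Clifford: `a ⊹ ∻a = ∻a ⊹ a` -/
theorem ffee (a : S) : a ⊹ ∻a = ∻a ⊹ a := by
  have h6 := cs5 B (∻a)
  rw [nn B] at h6
  -- h6 : (a ⊹ ∻a) ⊹ (∻a ⊹ a) = a ⊹ ∻a
  calc a ⊹ ∻a = (a ⊹ ∻a) ⊹ (∻a ⊹ a) := h6.symm
  _ = (∻a ⊹ a) ⊹ (a ⊹ ∻a) := acomm B (ff_idem B a) (ee_idem B a)
  _ = ∻a ⊹ a := cs5 B a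

/-- additive centrality of idempotents -/
theorem acen {e : S} (he : e ⊹ e = e) (x : S) : e ⊹ x = x ⊹ e :=
  idem_central (aS B) (ffee B) he x

theorem aswapR {e f : S} (he : e ⊹ e = e) (hf : f ⊹ f = f) (t : S) :
    t ⊹ e ⊹ f = t ⊹ f ⊹ e := by
  rw [B.add_assoc, B.add_assoc, acomm B he hf]

/-- P8 : `h ⊹ h⬝c = h⬝c` for an additive idempotent `h` -/
theorem p8 {h : S} (hh : h ⊹ h = h) (c : S) : h ⊹ h ⬝ c = h ⬝ c := by
  have := ffL B h c
  rw [aidem_neg B hh, hh] at this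
  exact this

/-- E-lemma : `e ⊹ f = e ⬝ f` for idempotents -/
theorem eqEF {e f : S} (he : e ⊹ e = e) (hf : f ⊹ f = f) : e ⊹ f = e ⬝ f := by
  have me := aidem_midem B he
  have mf := aidem_midem B hf
  have nege := aidem_neg B he
  have hg : (e ⊹ f) ⊹ (e ⊹ f) = e ⊹ f := aidem_add B he hf
  have mg := aidem_midem B hg
  have ngg := aidem_neg B hg
  have mh := midem_mul B me mf
  have ah := midem_aidem B mh
  have hge : (e ⊹ f) ⬝ e = e ⊹ e ⬝ f := by
    calc (e ⊹ f) ⬝ e = e ⬝ (e ⊹ f) := (mcen B me (e ⊹ f)).symm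
    _ = e ⬝ e ⊹ ∻e ⊹ e ⬝ f := B.dist e e f
    _ = e ⊹ e ⊹ e ⬝ f := by rw [me, nege]
    _ = e ⊹ e ⬝ f := by rw [he]
  have hgf : (e ⊹ f) ⬝ f = f ⊹ e ⬝ f := by
    calc (e ⊹ f) ⬝ f = f ⬝ (e ⊹ f) := (mcen B mf (e ⊹ f)).symm
    _ = f ⬝ e ⊹ ∻f ⊹ f ⬝ f := B.dist f e f
    _ = e ⬝ f ⊹ f ⊹ f := by rw [mcomm B mf me, aidem_neg B hf, mf]
    _ = e ⬝ f ⊹ (f ⊹ f) := by simp only [B.add_assoc]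
    _ = e ⬝ f ⊹ f := by rw [hf]
    _ = f ⊹ e ⬝ f := acomm B ah hf
  have hiii : e ⊹ f = (e ⊹ e ⬝ f) ⊹ (e ⊹ f) ⊹ (f ⊹ e ⬝ f) := by
    calc e ⊹ f = (e ⊹ f) ⬝ (e ⊹ f) := mg.symm
    _ = (e ⊹ f) ⬝ e ⊹ ∻(e ⊹ f) ⊹ (e ⊹ f) ⬝ f := B.dist (e ⊹ f) e f
    _ = (e ⊹ e ⬝ f) ⊹ (e ⊹ f) ⊹ (f ⊹ e ⬝ f) := by rw [hge, hgf, ngg]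
  have hgh : (e ⊹ f) ⬝ (e ⬝ f) = e ⬝ f := by
    have h1 : (e ⬝ f) ⬝ e = e ⬝ f := by
      calc (e ⬝ f) ⬝ e = e ⬝ (f ⬝ e) := by simp only [B.mul_assoc]
      _ = e ⬝ (e ⬝ f) := by rw [mcomm B mf me]
      _ = (e ⬝ e) ⬝ f := by simp only [B.mul_assoc]
      _ = e ⬝ f := by rw [me]
    have h2 : (e ⬝ f) ⬝ f = e ⬝ f := by
      calc (e ⬝ f) ⬝ f = e ⬝ (f ⬝ f) := by simp only [B.mul_assoc]
      _ = e ⬝ f := by rw [mf]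
    calc (e ⊹ f) ⬝ (e ⬝ f) = (e ⬝ f) ⬝ (e ⊹ f) := mcomm B mg mh
    _ = (e ⬝ f) ⬝ e ⊹ ∻(e ⬝ f) ⊹ (e ⬝ f) ⬝ f := B.dist (e ⬝ f) e f
    _ = e ⬝ f ⊹ e ⬝ f ⊹ e ⬝ f := by rw [h1, h2, aidem_neg B ah]
    _ = e ⬝ f := by rw [ah, ah]
  have hfin : (e ⊹ f) ⊹ e ⬝ f = e ⬝ f := by
    calc (e ⊹ f) ⊹ e ⬝ f = (e ⊹ f) ⊹ (e ⊹ f) ⬝ (e ⬝ f) := by rw [hgh]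
    _ = (e ⊹ f) ⬝ (e ⬝ f) := p8 B hg (e ⬝ f)
    _ = e ⬝ f := hgh
  -- rearrange hiii to `e ⊹ f = (e ⊹ f) ⊹ e ⬝ f`
  have hre : (e ⊹ e ⬝ f) ⊹ (e ⊹ f) ⊹ (f ⊹ e ⬝ f) = (e ⊹ f) ⊹ e ⬝ f := by
    calc (e ⊹ e ⬝ f) ⊹ (e ⊹ f) ⊹ (f ⊹ e ⬝ f)
        = e ⊹ (e ⬝ f ⊹ (e ⊹ (f ⊹ (f ⊹ e ⬝ f)))) := by
          simp only [B.add_assoc]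
    _ = e ⊹ (e ⬝ f ⊹ (e ⊹ (f ⊹ e ⬝ f))) := by rw [acontract B hf]
    _ = e ⊹ (e ⊹ (e ⬝ f ⊹ (f ⊹ e ⬝ f))) := by rw [aswap B ah he]
    _ = e ⊹ (e ⬝ f ⊹ (f ⊹ e ⬝ f)) := acontract B he _
    _ = e ⊹ (f ⊹ (e ⬝ f ⊹ e ⬝ f)) := by rw [aswap B ah hf]
    _ = e ⊹ (f ⊹ e ⬝ f) := by rw [ah]
    _ = (e ⊹ f) ⊹ e ⬝ f := by simp only [B.add_assoc]
  rw [hre] at hiii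
  rw [hiii, hfin]

end Brace2
end DWBAux
namespace DWBAux
open InvSg

variable {S : Type*} (B : DualWeakBrace S)

/-- the idempotent `ε x = ∻x ⊹ x` -/
def ee (x : S) : S := B.add (B.neg x) x

section Brace3

local infixl:65 " ⊹ " => B.add
local infixl:70 " ⬝ " => B.mul
local prefix:100 "∻" => B.neg
local postfix:max "ᵛ" => B.inv
local notation "ε" => ee B

theorem e_def (x : S) : ε x = ∻x ⊹ x := rfl
theorem e_mul1 (x : S) : ε x = x ⬝ xᵛ := (weak' B x).symm
theorem e_mul2 (x : S) : ε x = xᵛ ⬝ x := (weak2 B x).symm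
theorem eidem (x : S) : ε x ⊹ ε x = ε x := ee_idem B x
theorem emidem (x : S) : ε x ⬝ ε x = ε x := aidem_midem B (eidem B x)
theorem eneg (x : S) : ∻(ε x) = ε x := aidem_neg B (eidem B x)
theorem einv (x : S) : (ε x)ᵛ = ε x := midem_inv B (emidem B x)
theorem add_e (x : S) : x ⊹ ε x = x := regA' B x
theorem e_add (x : S) : ε x ⊹ x = x := by rw [acen B (eidem B x), add_e B]
theorem mul_e (x : S) : x ⬝ ε x = x := by rw [e_mul2 B, regM' B]
theorem e_mul (x : S) : ε x ⬝ x = x := by rw [mcen B (emidem B x), mul_e B]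
theorem e_negx (x : S) : ε (∻x) = ε x := by
  show ∻∻x ⊹ ∻x = ε x
  rw [nn B, ffee B]; rfl
theorem e_invx (x : S) : ε (xᵛ) = ε x := by
  show ∻(xᵛ) ⊹ xᵛ = ∻x ⊹ x
  exact eeInv B x
theorem e_of_aidem {g : S} (hg : g ⊹ g = g) : ε g = g := by
  show ∻g ⊹ g = g
  rw [aidem_neg B hg, hg]

theorem e_mulxy (x y : S) : ε (x ⬝ y) = ε x ⬝ ε y := by
  calc ε (x ⬝ y) = (x ⬝ y)ᵛ ⬝ (x ⬝ y) := e_mul2 B (x ⬝ y)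
  _ = yᵛ ⬝ (xᵛ ⬝ x) ⬝ y := by rw [irev B]; simp only [B.mul_assoc]
  _ = yᵛ ⬝ ε x ⬝ y := by rw [← e_mul2 B]
  _ = ε x ⬝ yᵛ ⬝ y := by rw [mcen B (emidem B x) (yᵛ)]
  _ = ε x ⬝ (yᵛ ⬝ y) := by simp only [B.mul_assoc]
  _ = ε x ⬝ ε y := by rw [← e_mul2 B]

theorem e_addxy (x y : S) : ε (x ⊹ y) = ε x ⬝ ε y := by
  calc ε (x ⊹ y) = ∻(x ⊹ y) ⊹ (x ⊹ y) := rfl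
  _ = ∻y ⊹ ∻x ⊹ (x ⊹ y) := by rw [nrev B]
  _ = ∻y ⊹ ((∻x ⊹ x) ⊹ y) := by simp only [B.add_assoc]
  _ = ∻y ⊹ (ε x ⊹ y) := rfl
  _ = ∻y ⊹ (y ⊹ ε x) := by rw [acen B (eidem B x) y]
  _ = (∻y ⊹ y) ⊹ ε x := by simp only [B.add_assoc]
  _ = ε y ⊹ ε x := rfl
  _ = ε x ⊹ ε y := acomm B (eidem B y) (eidem B x)
  _ = ε x ⬝ ε y := eqEF B (eidem B x) (eidem B y)

section Absorb
variable {g : S}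

theorem absR (hg : g ⊹ g = g) {x : S} (habs : ε x ⬝ g = ε x) : x ⊹ g = x := by
  calc x ⊹ g = (x ⊹ ε x) ⊹ g := by rw [add_e B]
  _ = x ⊹ (ε x ⊹ g) := by simp only [B.add_assoc]
  _ = x ⊹ (ε x ⬝ g) := by rw [eqEF B (eidem B x) hg]
  _ = x ⊹ ε x := by rw [habs]
  _ = x := add_e B x

theorem absL (hg : g ⊹ g = g) {x : S} (habs : ε x ⬝ g = ε x) : g ⊹ x = x := by
  rw [acen B hg x]; exact absR B hg habs

theorem absM (hg : g ⊹ g = g) {x : S} (habs : ε x ⬝ g = ε x) : x ⬝ g = x := by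
  calc x ⬝ g = (x ⬝ ε x) ⬝ g := by rw [mul_e B]
  _ = x ⬝ (ε x ⬝ g) := by simp only [B.mul_assoc]
  _ = x ⬝ ε x := by rw [habs]
  _ = x := mul_e B x

theorem absM' (hg : g ⊹ g = g) {x : S} (habs : ε x ⬝ g = ε x) : g ⬝ x = x := by
  rw [mcen B (aidem_midem B hg) x]; exact absM B hg habs

/-- C2 : `λ_x(g) = ε x ⬝ g` -/
theorem lamE (hg : g ⊹ g = g) (x : S) : ∻x ⊹ x ⬝ g = ε x ⬝ g := by
  have hu : (∻x ⊹ x ⬝ g) ⊹ (∻x ⊹ x ⬝ g) = ∻x ⊹ x ⬝ g := by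
    calc (∻x ⊹ x ⬝ g) ⊹ (∻x ⊹ x ⬝ g) = ∻x ⊹ (x ⬝ g ⊹ ∻x ⊹ x ⬝ g) := by
          simp only [B.add_assoc]
    _ = ∻x ⊹ x ⬝ (g ⊹ g) := by rw [← B.dist]
    _ = ∻x ⊹ x ⬝ g := by rw [hg]
  calc ∻x ⊹ x ⬝ g = ε (∻x ⊹ x ⬝ g) := (e_of_aidem B hu).symm
  _ = ε (∻x) ⬝ ε (x ⬝ g) := e_addxy B _ _
  _ = ε x ⬝ (ε x ⬝ ε g) := by rw [e_negx B, e_mulxy B]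
  _ = ε x ⬝ (ε x ⬝ g) := by rw [e_of_aidem B hg]
  _ = (ε x ⬝ ε x) ⬝ g := by simp only [B.mul_assoc]
  _ = ε x ⬝ g := by rw [emidem B]

/-- C1 -/
theorem mulg (hg : g ⊹ g = g) (x : S) : x ⬝ g = x ⊹ ε x ⬝ g := by
  rw [← lamE B hg x, p3 B]

theorem mulg' (hg : g ⊹ g = g) (x : S) : x ⬝ g = ε x ⬝ g ⊹ x := by
  rw [mulg B hg x]
  exact (acen B (midem_aidem B (midem_mul B (emidem B x) (aidem_midem B hg))) x).symm

theorem negmulg (hg : g ⊹ g = g) (x : S) : ∻(x ⬝ g) = ∻x ⬝ g := by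
  have hgidem := midem_aidem B (midem_mul B (emidem B x) (aidem_midem B hg))
  calc ∻(x ⬝ g) = ∻(x ⊹ ε x ⬝ g) := by rw [← mulg B hg x]
  _ = ∻(ε x ⬝ g) ⊹ ∻x := nrev B _ _
  _ = ε x ⬝ g ⊹ ∻x := by rw [aidem_neg B hgidem]
  _ = ∻x ⊹ ε x ⬝ g := acen B hgidem (∻x)
  _ = ∻x ⊹ ε (∻x) ⬝ g := by rw [e_negx B]
  _ = ∻x ⬝ g := (mulg B hg (∻x)).symm

end Absorb

section Dr
variable {z : S}

theorem dr_neg (hz : ∀ a b : S, (a ⊹ b) ⬝ z = a ⬝ z ⊹ ∻z ⊹ b ⬝ z) (x : S) : ∻x ⬝ z = z ⊹ ∻(x ⬝ z) ⊹ z := by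
  have hu1 : (x ⬝ z ⊹ ∻z) ⊹ (∻x ⬝ z ⊹ ∻z) ⊹ (x ⬝ z ⊹ ∻z) = x ⬝ z ⊹ ∻z := by
    have h1 : (x ⬝ z ⊹ ∻z) ⊹ (∻x ⬝ z ⊹ ∻z) = (x ⊹ ∻x) ⬝ z ⊹ ∻z := by
      calc (x ⬝ z ⊹ ∻z) ⊹ (∻x ⬝ z ⊹ ∻z) = (x ⬝ z ⊹ ∻z ⊹ ∻x ⬝ z) ⊹ ∻z := by
            simp only [B.add_assoc]
      _ = (x ⊹ ∻x) ⬝ z ⊹ ∻z := by rw [← hz]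
    rw [h1]
    calc (x ⊹ ∻x) ⬝ z ⊹ ∻z ⊹ (x ⬝ z ⊹ ∻z) = ((x ⊹ ∻x) ⬝ z ⊹ ∻z ⊹ x ⬝ z) ⊹ ∻z := by
          simp only [B.add_assoc]
    _ = (x ⊹ ∻x ⊹ x) ⬝ z ⊹ ∻z := by rw [← hz]
    _ = x ⬝ z ⊹ ∻z := by rw [B.add_reg]
  have hu2 : (∻x ⬝ z ⊹ ∻z) ⊹ (x ⬝ z ⊹ ∻z) ⊹ (∻x ⬝ z ⊹ ∻z) = ∻x ⬝ z ⊹ ∻z := by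
    have h1 : (∻x ⬝ z ⊹ ∻z) ⊹ (x ⬝ z ⊹ ∻z) = (∻x ⊹ x) ⬝ z ⊹ ∻z := by
      calc (∻x ⬝ z ⊹ ∻z) ⊹ (x ⬝ z ⊹ ∻z) = (∻x ⬝ z ⊹ ∻z ⊹ x ⬝ z) ⊹ ∻z := by
            simp only [B.add_assoc]
      _ = (∻x ⊹ x) ⬝ z ⊹ ∻z := by rw [← hz]
    rw [h1]
    calc (∻x ⊹ x) ⬝ z ⊹ ∻z ⊹ (∻x ⬝ z ⊹ ∻z) = ((∻x ⊹ x) ⬝ z ⊹ ∻z ⊹ ∻x ⬝ z) ⊹ ∻z := by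
          simp only [B.add_assoc]
    _ = (∻x ⊹ x ⊹ ∻x) ⬝ z ⊹ ∻z := by rw [← hz]
    _ = ∻x ⬝ z ⊹ ∻z := by rw [B.neg_reg]
  have hy := B.neg_unique _ _ hu1 hu2
  -- hy : ∻x ⬝ z ⊹ ∻z = ∻(x ⬝ z ⊹ ∻z)
  rw [nrev B, nn B] at hy
  have habs : ε (∻x ⬝ z) ⬝ ε z = ε (∻x ⬝ z) := by
    rw [e_mulxy B, e_negx B]
    simp only [B.mul_assoc]
    rw [emidem B]
  calc ∻x ⬝ z = ∻x ⬝ z ⊹ ε z := (absR B (eidem B z) habs).symm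
  _ = ∻x ⬝ z ⊹ (∻z ⊹ z) := rfl
  _ = (∻x ⬝ z ⊹ ∻z) ⊹ z := by simp only [B.add_assoc]
  _ = (z ⊹ ∻(x ⬝ z)) ⊹ z := by rw [hy]

theorem dr_inv (hz : ∀ a b : S, (a ⊹ b) ⬝ z = a ⬝ z ⊹ ∻z ⊹ b ⬝ z) (a b : S) : (a ⊹ b) ⬝ zᵛ = a ⬝ zᵛ ⊹ ∻(zᵛ) ⊹ b ⬝ zᵛ := by
  have hzw : z ⬝ zᵛ = ε z := (e_mul1 B z).symm
  have hwz : zᵛ ⬝ z = ε z := (e_mul2 B z).symm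
  have habsb : ε (b ⬝ ε z) ⬝ ε z = ε (b ⬝ ε z) := by
    rw [e_mulxy B, e_of_aidem B (eidem B z)]
    simp only [B.mul_assoc]
    rw [emidem B]
  have hXz : (a ⬝ zᵛ ⊹ ∻(zᵛ) ⊹ b ⬝ zᵛ) ⬝ z = a ⬝ ε z ⊹ b ⬝ ε z := by
    calc (a ⬝ zᵛ ⊹ ∻(zᵛ) ⊹ b ⬝ zᵛ) ⬝ z
        = (a ⬝ zᵛ ⊹ ∻(zᵛ)) ⬝ z ⊹ ∻z ⊹ (b ⬝ zᵛ) ⬝ z := hz _ _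
    _ = (a ⬝ zᵛ ⬝ z ⊹ ∻z ⊹ ∻(zᵛ) ⬝ z) ⊹ ∻z ⊹ (b ⬝ zᵛ) ⬝ z := by rw [hz]
    _ = (a ⬝ (zᵛ ⬝ z) ⊹ ∻z ⊹ ∻(zᵛ) ⬝ z) ⊹ ∻z ⊹ b ⬝ (zᵛ ⬝ z) := by
          simp only [B.mul_assoc]
    _ = (a ⬝ ε z ⊹ ∻z ⊹ (z ⊹ z)) ⊹ ∻z ⊹ b ⬝ ε z := by
          rw [dr_neg B hz (zᵛ), hwz, eneg B, add_e B]
    _ = a ⬝ ε z ⊹ ((∻z ⊹ z) ⊹ (z ⊹ ∻z)) ⊹ b ⬝ ε z := by simp only [B.add_assoc]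
    _ = a ⬝ ε z ⊹ (ε z ⊹ ε z) ⊹ b ⬝ ε z := by rw [ffee B]; rfl
    _ = a ⬝ ε z ⊹ ε z ⊹ b ⬝ ε z := by rw [eidem B]
    _ = a ⬝ ε z ⊹ (ε z ⊹ b ⬝ ε z) := by simp only [B.add_assoc]
    _ = a ⬝ ε z ⊹ b ⬝ ε z := by rw [absL B (eidem B z) habsb]
  have hYz : ((a ⊹ b) ⬝ zᵛ) ⬝ z = a ⬝ ε z ⊹ b ⬝ ε z := by
    calc ((a ⊹ b) ⬝ zᵛ) ⬝ z = (a ⊹ b) ⬝ (zᵛ ⬝ z) := B.mul_assoc _ _ _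
    _ = (a ⊹ b) ⬝ ε z := by rw [hwz]
    _ = ε z ⬝ (a ⊹ b) := (mcen B (emidem B z) _).symm
    _ = ε z ⬝ a ⊹ ∻(ε z) ⊹ ε z ⬝ b := B.dist _ _ _
    _ = a ⬝ ε z ⊹ ε z ⊹ b ⬝ ε z := by
          rw [eneg B, mcen B (emidem B z) a, mcen B (emidem B z) b]
    _ = a ⬝ ε z ⊹ (ε z ⊹ b ⬝ ε z) := by simp only [B.add_assoc]
    _ = a ⬝ ε z ⊹ b ⬝ ε z := by rw [absL B (eidem B z) habsb]
  have habsX : ε (a ⬝ zᵛ ⊹ ∻(zᵛ) ⊹ b ⬝ zᵛ) ⬝ ε z = ε (a ⬝ zᵛ ⊹ ∻(zᵛ) ⊹ b ⬝ zᵛ) := by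
    rw [e_addxy B, e_addxy B, e_mulxy B, e_mulxy B, e_negx B, e_invx B]
    simp only [B.mul_assoc]
    rw [emidem B]
  symm
  calc a ⬝ zᵛ ⊹ ∻(zᵛ) ⊹ b ⬝ zᵛ
      = (a ⬝ zᵛ ⊹ ∻(zᵛ) ⊹ b ⬝ zᵛ) ⬝ ε z := (absM B (eidem B z) habsX).symm
  _ = (a ⬝ zᵛ ⊹ ∻(zᵛ) ⊹ b ⬝ zᵛ) ⬝ (z ⬝ zᵛ) := by rw [hzw]
  _ = ((a ⬝ zᵛ ⊹ ∻(zᵛ) ⊹ b ⬝ zᵛ) ⬝ z) ⬝ zᵛ := (B.mul_assoc _ _ _).symm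
  _ = (((a ⊹ b) ⬝ zᵛ) ⬝ z) ⬝ zᵛ := by rw [hXz, ← hYz]
  _ = ((a ⊹ b) ⬝ zᵛ) ⬝ (z ⬝ zᵛ) := B.mul_assoc _ _ _
  _ = ((a ⊹ b) ⬝ zᵛ) ⬝ ε z := by rw [hzw]
  _ = (a ⊹ b) ⬝ (zᵛ ⬝ ε z) := B.mul_assoc _ _ _
  _ = (a ⊹ b) ⬝ zᵛ := by rw [← e_invx B, mul_e B]

end Dr
end Brace3
end DWBAux
namespace DWBAux
open InvSg

variable {S : Type*} (B : DualWeakBrace S)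

section Brace4

local infixl:65 " ⊹ " => B.add
local infixl:70 " ⬝ " => B.mul
local prefix:100 "∻" => B.neg
local postfix:max "ᵛ" => B.inv
local notation "ε" => ee B

theorem mswapC {h : S} (hh : h ⬝ h = h) (y t : S) : h ⬝ (y ⬝ t) = y ⬝ (h ⬝ t) := by
  rw [← B.mul_assoc, mcen B hh y, B.mul_assoc]

theorem aswapC {h : S} (hh : h ⊹ h = h) (y t : S) : h ⊹ (y ⊹ t) = y ⊹ (h ⊹ t) := by
  rw [← B.add_assoc, acen B hh y, B.add_assoc]

theorem mcontractC {h : S} (hh : h ⬝ h = h) (t : S) : h ⬝ (h ⬝ t) = h ⬝ t := by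
  rw [← B.mul_assoc, hh]

variable (z a b : S)

/-- the idempotent `E = ε(ab) ⬝ ε z` -/
def bigE : S := B.mul (ee B (B.mul a b)) (ee B z)

theorem bigE_def : bigE B z a b = ε (a ⬝ b) ⬝ ε z := rfl

theorem mE : bigE B z a b ⬝ bigE B z a b = bigE B z a b :=
  midem_mul B (emidem B (a ⬝ b)) (emidem B z)

theorem aE : bigE B z a b ⊹ bigE B z a b = bigE B z a b :=
  midem_aidem B (mE B z a b)

theorem nE : ∻(bigE B z a b) = bigE B z a b := aidem_neg B (aE B z a b)

theorem hEz : bigE B z a b ⬝ ε z = bigE B z a b := by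
  rw [bigE_def, B.mul_assoc, emidem B]

theorem hzE : ε z ⬝ bigE B z a b = bigE B z a b := by
  rw [mcen B (emidem B z), hEz]

theorem eabz : ε ((a ⬝ b) ⬝ z) = bigE B z a b := by
  rw [e_mulxy B, bigE_def]

theorem eabez : ε ((a ⬝ b) ⬝ ε z) = bigE B z a b := by
  rw [e_mulxy B, e_of_aidem B (eidem B z), bigE_def]

theorem eaez : ε (a ⬝ ε z) = ε a ⬝ ε z := by
  rw [e_mulxy B, e_of_aidem B (eidem B z)]

theorem eaez_abs : ε (a ⬝ ε z) ⬝ ε z = ε (a ⬝ ε z) := by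
  rw [eaez, B.mul_assoc, emidem B]

/-- `E` absorbs into `ab⬝z`-type terms: `ε(x) ⬝ E = ε(x)` instances -/
theorem absEabz : ε ((a ⬝ b) ⬝ z) ⬝ bigE B z a b = ε ((a ⬝ b) ⬝ z) := by
  rw [eabz, mE]

theorem absEabez : ε ((a ⬝ b) ⬝ ε z) ⬝ bigE B z a b = ε ((a ⬝ b) ⬝ ε z) := by
  rw [eabez, mE]

theorem hEab : bigE B z a b ⬝ (a ⬝ b) = (a ⬝ b) ⬝ ε z := by
  calc bigE B z a b ⬝ (a ⬝ b) = (a ⬝ b) ⬝ bigE B z a b := mcen B (mE B z a b) _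
  _ = ((a ⬝ b) ⬝ ε (a ⬝ b)) ⬝ ε z := by rw [bigE_def, ← B.mul_assoc]
  _ = (a ⬝ b) ⬝ ε z := by rw [mul_e B]

/-- `ε σ = E` -/
theorem eSigma : ε (B.sigma z a b) = bigE B z a b := by
  show ε (∻(a ⬝ z) ⊹ (a ⬝ b) ⬝ z) = bigE B z a b
  rw [e_addxy B, e_negx B, e_mulxy B (a ⬝ b) z, e_mulxy B a z, e_mulxy B a b, bigE_def,
    e_mulxy B a b]
  -- (ε a ⬝ ε z) ⬝ ((ε a ⬝ ε b) ⬝ ε z) = (ε a ⬝ ε b) ⬝ ε z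
  calc (ε a ⬝ ε z) ⬝ ((ε a ⬝ ε b) ⬝ ε z) = ε a ⬝ (ε z ⬝ (ε a ⬝ (ε b ⬝ ε z))) := by
        simp only [B.mul_assoc]
  _ = ε a ⬝ (ε a ⬝ (ε z ⬝ (ε b ⬝ ε z))) := by rw [mswapC B (emidem B z)]
  _ = ε a ⬝ (ε z ⬝ (ε b ⬝ ε z)) := mcontractC B (emidem B a) _
  _ = ε a ⬝ (ε b ⬝ (ε z ⬝ ε z)) := by rw [mswapC B (emidem B z)]
  _ = ε a ⬝ (ε b ⬝ ε z) := by rw [emidem B]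
  _ = (ε a ⬝ ε b) ⬝ ε z := by simp only [B.mul_assoc]

/-- `ε δ = E` where `δ = ab ⊹ ∻(a⬝zᵛ) ⊹ zᵛ` -/
theorem eDelta : ε ((a ⬝ b ⊹ ∻(a ⬝ zᵛ)) ⊹ zᵛ) = bigE B z a b := by
  rw [e_addxy B, e_addxy B, e_negx B, e_mulxy B a (zᵛ), e_invx B, bigE_def,
    e_mulxy B a b]
  -- ((ε a ⬝ ε b) ⬝ (ε a ⬝ ε z)) ⬝ ε z = (ε a ⬝ ε b) ⬝ ε z
  calc ((ε a ⬝ ε b) ⬝ (ε a ⬝ ε z)) ⬝ ε z = ε a ⬝ (ε b ⬝ (ε a ⬝ (ε z ⬝ ε z))) := by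
        simp only [B.mul_assoc]
  _ = ε a ⬝ (ε b ⬝ (ε a ⬝ ε z)) := by rw [emidem B]
  _ = ε a ⬝ (ε a ⬝ (ε b ⬝ ε z)) := by rw [mswapC B (emidem B b)]
  _ = ε a ⬝ (ε b ⬝ ε z) := mcontractC B (emidem B a) _
  _ = (ε a ⬝ ε b) ⬝ ε z := by simp only [B.mul_assoc]

/-- `ε γ = E` where `γ = E ⊹ a⬝ε z` -/
theorem eGamma : ε (bigE B z a b ⊹ a ⬝ ε z) = bigE B z a b := by
  rw [e_addxy B, e_of_aidem B (aE B z a b), eaez B, bigE_def, e_mulxy B a b]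
  -- ((ε a ⬝ ε b) ⬝ ε z) ⬝ (ε a ⬝ ε z) = (ε a ⬝ ε b) ⬝ ε z
  calc ((ε a ⬝ ε b) ⬝ ε z) ⬝ (ε a ⬝ ε z) = ε a ⬝ (ε b ⬝ (ε z ⬝ (ε a ⬝ ε z))) := by
        simp only [B.mul_assoc]
  _ = ε a ⬝ (ε b ⬝ (ε a ⬝ (ε z ⬝ ε z))) := by rw [mswapC B (emidem B z)]
  _ = ε a ⬝ (ε b ⬝ (ε a ⬝ ε z)) := by rw [emidem B]
  _ = ε a ⬝ (ε a ⬝ (ε b ⬝ ε z)) := by rw [mswapC B (emidem B b)]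
  _ = ε a ⬝ (ε b ⬝ ε z) := mcontractC B (emidem B a) _
  _ = (ε a ⬝ ε b) ⬝ ε z := by simp only [B.mul_assoc]

end Brace4
end DWBAux
namespace DWBAux
open InvSg

variable {S : Type*} (B : DualWeakBrace S)

section Brace5

local infixl:65 " ⊹ " => B.add
local infixl:70 " ⬝ " => B.mul
local prefix:100 "∻" => B.neg
local postfix:max "ᵛ" => B.inv
local notation "ε" => ee B

variable (z a b : S)

theorem t_zw : z ⬝ zᵛ = ε z := (e_mul1 B z).symm
theorem t_wz : zᵛ ⬝ z = ε z := (e_mul2 B z).symm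
theorem t_w_ez : zᵛ ⬝ ε z = zᵛ := by rw [← e_invx B z]; exact mul_e B (zᵛ)
theorem t_ez_w : ε z ⬝ zᵛ = zᵛ := by rw [mcen B (emidem B z), t_w_ez]
theorem FFz : z ⊹ ∻z = ε z := (ffee B z).trans (e_def B z).symm
theorem EEw : ∻(zᵛ) ⊹ zᵛ = ε z := by rw [← e_def B (zᵛ), e_invx B]
theorem FFw : zᵛ ⊹ ∻(zᵛ) = ε z := by rw [ffee B (zᵛ)]; exact EEw B z

theorem A1 : ε z ⊹ (a ⬝ b) ⬝ ε z = (a ⬝ b) ⬝ ε z :=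
  absL B (eidem B z) (by rw [eabez]; exact hEz B z a b)
theorem A2 : a ⬝ ε z ⊹ ε z = a ⬝ ε z := absR B (eidem B z) (eaez_abs B z a)
theorem A3 : ∻(a ⬝ ε z) ⊹ ε z = ∻(a ⬝ ε z) :=
  absR B (eidem B z) (by rw [e_negx B]; exact eaez_abs B z a)
theorem A4 : ε z ⊹ ∻(a ⬝ ε z) = ∻(a ⬝ ε z) :=
  absL B (eidem B z) (by rw [e_negx B]; exact eaez_abs B z a)
theorem A5 : bigE B z a b ⊹ (a ⬝ b) ⬝ z = (a ⬝ b) ⬝ z :=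
  absL B (aE B z a b) (by rw [eabz]; exact mE B z a b)
theorem A6 : ε z ⊹ (a ⬝ b) ⬝ z = (a ⬝ b) ⬝ z :=
  absL B (eidem B z) (by rw [eabz]; exact hEz B z a b)
theorem A7 : ((a ⬝ b ⊹ ∻(a ⬝ zᵛ)) ⊹ zᵛ) ⊹ bigE B z a b = (a ⬝ b ⊹ ∻(a ⬝ zᵛ)) ⊹ zᵛ :=
  absR B (aE B z a b) (by rw [eDelta]; exact mE B z a b)
theorem A8 : bigE B z a b ⊹ ε z = bigE B z a b := by
  rw [eqEF B (aE B z a b) (eidem B z)]; exact hEz B z a b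
theorem ab_e : (a ⬝ b) ⬝ ε z = a ⬝ b ⊹ bigE B z a b := by
  rw [mulg B (eidem B z) (a ⬝ b)]; rfl
theorem hEabe : bigE B z a b ⬝ ((a ⬝ b) ⬝ ε z) = (a ⬝ b) ⬝ ε z := by
  rw [← B.mul_assoc, hEab, B.mul_assoc, emidem B]

/-- `σ ⬝ (σᵛ ⬝ (a⬝b)) = ab ⬝ ε z` -/
theorem c1' : B.sigma z a b ⬝ ((B.sigma z a b)ᵛ ⬝ (a ⬝ b)) = (a ⬝ b) ⬝ ε z := by
  calc B.sigma z a b ⬝ ((B.sigma z a b)ᵛ ⬝ (a ⬝ b))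
      = (B.sigma z a b ⬝ (B.sigma z a b)ᵛ) ⬝ (a ⬝ b) := by simp only [B.mul_assoc]
  _ = ε (B.sigma z a b) ⬝ (a ⬝ b) := by rw [← e_mul1 B]
  _ = bigE B z a b ⬝ (a ⬝ b) := by rw [eSigma]
  _ = (a ⬝ b) ⬝ ε z := hEab B z a b

theorem c1 : B.sigma z a b ⬝ B.tau z b a = (a ⬝ b) ⬝ ε z := by
  show B.sigma z a b ⬝ (((B.sigma z a b)ᵛ ⬝ a) ⬝ b) = (a ⬝ b) ⬝ ε z
  calc B.sigma z a b ⬝ (((B.sigma z a b)ᵛ ⬝ a) ⬝ b)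
      = B.sigma z a b ⬝ ((B.sigma z a b)ᵛ ⬝ (a ⬝ b)) := by simp only [B.mul_assoc]
  _ = (a ⬝ b) ⬝ ε z := c1' B z a b

/-- `σᵛ ⬝ (ab ⬝ ε z) = σᵛ ⬝ (a ⬝ b)` -/
theorem sv_abs : (B.sigma z a b)ᵛ ⬝ ((a ⬝ b) ⬝ ε z) = (B.sigma z a b)ᵛ ⬝ (a ⬝ b) := by
  have habs : ε ((B.sigma z a b)ᵛ ⬝ (a ⬝ b)) ⬝ ε z = ε ((B.sigma z a b)ᵛ ⬝ (a ⬝ b)) := by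
    have h1 : ε ((B.sigma z a b)ᵛ ⬝ (a ⬝ b)) = bigE B z a b := by
      rw [e_mulxy B, e_invx B, eSigma]
      calc bigE B z a b ⬝ ε (a ⬝ b) = ε (a ⬝ b) ⬝ bigE B z a b :=
            mcen B (mE B z a b) _
      _ = ε (a ⬝ b) ⬝ (ε (a ⬝ b) ⬝ ε z) := by rw [bigE_def]
      _ = ε (a ⬝ b) ⬝ ε z := mcontractC B (emidem B (a ⬝ b)) _
      _ = bigE B z a b := (bigE_def B z a b).symm
    rw [h1]; exact hEz B z a b
  calc (B.sigma z a b)ᵛ ⬝ ((a ⬝ b) ⬝ ε z)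
      = ((B.sigma z a b)ᵛ ⬝ (a ⬝ b)) ⬝ ε z := by simp only [B.mul_assoc]
  _ = (B.sigma z a b)ᵛ ⬝ (a ⬝ b) := absM B (eidem B z) habs

/-- `δᵛ ⬝ (ab ⬝ ε z) = δᵛ ⬝ (a ⬝ b)` -/
theorem dv_abs :
    ((a ⬝ b ⊹ ∻(a ⬝ zᵛ)) ⊹ zᵛ)ᵛ ⬝ ((a ⬝ b) ⬝ ε z)
      = ((a ⬝ b ⊹ ∻(a ⬝ zᵛ)) ⊹ zᵛ)ᵛ ⬝ (a ⬝ b) := by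
  have habs : ε (((a ⬝ b ⊹ ∻(a ⬝ zᵛ)) ⊹ zᵛ)ᵛ ⬝ (a ⬝ b)) ⬝ ε z
      = ε (((a ⬝ b ⊹ ∻(a ⬝ zᵛ)) ⊹ zᵛ)ᵛ ⬝ (a ⬝ b)) := by
    have h1 : ε (((a ⬝ b ⊹ ∻(a ⬝ zᵛ)) ⊹ zᵛ)ᵛ ⬝ (a ⬝ b)) = bigE B z a b := by
      rw [e_mulxy B, e_invx B, eDelta]
      calc bigE B z a b ⬝ ε (a ⬝ b) = ε (a ⬝ b) ⬝ bigE B z a b :=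
            mcen B (mE B z a b) _
      _ = ε (a ⬝ b) ⬝ (ε (a ⬝ b) ⬝ ε z) := by rw [bigE_def]
      _ = ε (a ⬝ b) ⬝ ε z := mcontractC B (emidem B (a ⬝ b)) _
      _ = bigE B z a b := (bigE_def B z a b).symm
    rw [h1]; exact hEz B z a b
  calc ((a ⬝ b ⊹ ∻(a ⬝ zᵛ)) ⊹ zᵛ)ᵛ ⬝ ((a ⬝ b) ⬝ ε z)
      = (((a ⬝ b ⊹ ∻(a ⬝ zᵛ)) ⊹ zᵛ)ᵛ ⬝ (a ⬝ b)) ⬝ ε z := by simp only [B.mul_assoc]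
  _ = ((a ⬝ b ⊹ ∻(a ⬝ zᵛ)) ⊹ zᵛ)ᵛ ⬝ (a ⬝ b) := absM B (eidem B z) habs

/-- `δ ⬝ (δᵛ ⬝ (a⬝b)) = ab ⬝ ε z` -/
theorem c8' :
    ((a ⬝ b ⊹ ∻(a ⬝ zᵛ)) ⊹ zᵛ) ⬝ (((a ⬝ b ⊹ ∻(a ⬝ zᵛ)) ⊹ zᵛ)ᵛ ⬝ (a ⬝ b))
      = (a ⬝ b) ⬝ ε z := by
  calc ((a ⬝ b ⊹ ∻(a ⬝ zᵛ)) ⊹ zᵛ) ⬝ (((a ⬝ b ⊹ ∻(a ⬝ zᵛ)) ⊹ zᵛ)ᵛ ⬝ (a ⬝ b))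
      = (((a ⬝ b ⊹ ∻(a ⬝ zᵛ)) ⊹ zᵛ) ⬝ ((a ⬝ b ⊹ ∻(a ⬝ zᵛ)) ⊹ zᵛ)ᵛ) ⬝ (a ⬝ b) := by
        simp only [B.mul_assoc]
  _ = ε ((a ⬝ b ⊹ ∻(a ⬝ zᵛ)) ⊹ zᵛ) ⬝ (a ⬝ b) := by rw [← e_mul1 B]
  _ = bigE B z a b ⬝ (a ⬝ b) := by rw [eDelta]
  _ = (a ⬝ b) ⬝ ε z := hEab B z a b

theorem c8 :
    ((a ⬝ b ⊹ ∻(a ⬝ zᵛ)) ⊹ zᵛ) ⬝ ((((a ⬝ b ⊹ ∻(a ⬝ zᵛ)) ⊹ zᵛ)ᵛ ⬝ a) ⬝ b)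
      = (a ⬝ b) ⬝ ε z := by
  calc ((a ⬝ b ⊹ ∻(a ⬝ zᵛ)) ⊹ zᵛ) ⬝ ((((a ⬝ b ⊹ ∻(a ⬝ zᵛ)) ⊹ zᵛ)ᵛ ⬝ a) ⬝ b)
      = ((a ⬝ b ⊹ ∻(a ⬝ zᵛ)) ⊹ zᵛ) ⬝ (((a ⬝ b ⊹ ∻(a ⬝ zᵛ)) ⊹ zᵛ)ᵛ ⬝ (a ⬝ b)) := by
        simp only [B.mul_assoc]
  _ = (a ⬝ b) ⬝ ε z := c8' B z a b

end Brace5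
end DWBAux
namespace DWBAux
open InvSg

variable {S : Type*} (B : DualWeakBrace S)

section Brace6

local infixl:65 " ⊹ " => B.add
local infixl:70 " ⬝ " => B.mul
local prefix:100 "∻" => B.neg
local postfix:max "ᵛ" => B.inv
local notation "ε" => ee B

variable (z a b : S)

theorem A9 : ∻z ⊹ ε z = ∻z := by rw [← e_negx B z]; exact add_e B (∻z)

theorem c1e : B.sigma z a b ⬝ (((B.sigma z a b)ᵛ ⬝ a) ⬝ b) = (a ⬝ b) ⬝ ε z := by
  calc B.sigma z a b ⬝ (((B.sigma z a b)ᵛ ⬝ a) ⬝ b)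
      = B.sigma z a b ⬝ ((B.sigma z a b)ᵛ ⬝ (a ⬝ b)) := by simp only [B.mul_assoc]
  _ = (a ⬝ b) ⬝ ε z := c1' B z a b

section WithHz
/-- `σ ⬝ zᵛ` -/
theorem c2 (hz' : ∀ x y : S, (x ⊹ y) ⬝ z = x ⬝ z ⊹ ∻z ⊹ y ⬝ z) : B.sigma z a b ⬝ zᵛ = (zᵛ ⊹ ∻(a ⬝ ε z)) ⊹ (a ⬝ b) ⬝ ε z := by
  have hw := dr_inv B hz'
  show (∻(a ⬝ z) ⊹ (a ⬝ b) ⬝ z) ⬝ zᵛ = (zᵛ ⊹ ∻(a ⬝ ε z)) ⊹ (a ⬝ b) ⬝ ε z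
  calc (∻(a ⬝ z) ⊹ (a ⬝ b) ⬝ z) ⬝ zᵛ
      = ∻(a ⬝ z) ⬝ zᵛ ⊹ ∻(zᵛ) ⊹ ((a ⬝ b) ⬝ z) ⬝ zᵛ := hw _ _
  _ = ((zᵛ ⊹ ∻((a ⬝ z) ⬝ zᵛ)) ⊹ zᵛ) ⊹ ∻(zᵛ) ⊹ ((a ⬝ b) ⬝ z) ⬝ zᵛ := by
        rw [dr_neg B hw (a ⬝ z)]
  _ = ((zᵛ ⊹ ∻(a ⬝ ε z)) ⊹ zᵛ) ⊹ ∻(zᵛ) ⊹ (a ⬝ b) ⬝ ε z := by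
        rw [B.mul_assoc a z (zᵛ), B.mul_assoc (a ⬝ b) z (zᵛ), t_zw]
  _ = (zᵛ ⊹ ∻(a ⬝ ε z)) ⊹ ((zᵛ ⊹ ∻(zᵛ)) ⊹ (a ⬝ b) ⬝ ε z) := by
        simp only [B.add_assoc]
  _ = (zᵛ ⊹ ∻(a ⬝ ε z)) ⊹ (ε z ⊹ (a ⬝ b) ⬝ ε z) := by rw [FFw]
  _ = (zᵛ ⊹ ∻(a ⬝ ε z)) ⊹ (a ⬝ b) ⬝ ε z := by rw [A1]

/-- first component of `ř ∘ r` equals `γ = E ⊹ a⬝ε z` -/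
theorem c3 (hz' : ∀ x y : S, (x ⊹ y) ⬝ z = x ⬝ z ⊹ ∻z ⊹ y ⬝ z) :
    (B.sigma z a b ⬝ (((B.sigma z a b)ᵛ ⬝ a) ⬝ b) ⊹ ∻(B.sigma z a b ⬝ zᵛ)) ⊹ zᵛ
      = bigE B z a b ⊹ a ⬝ ε z := by
  rw [c1e B z a b, c2 B z a b hz']
  calc ((a ⬝ b) ⬝ ε z ⊹ ∻((zᵛ ⊹ ∻(a ⬝ ε z)) ⊹ (a ⬝ b) ⬝ ε z)) ⊹ zᵛ
      = ((a ⬝ b) ⬝ ε z ⊹ (∻((a ⬝ b) ⬝ ε z) ⊹ ∻(zᵛ ⊹ ∻(a ⬝ ε z)))) ⊹ zᵛ := by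
        rw [nrev B (zᵛ ⊹ ∻(a ⬝ ε z)) ((a ⬝ b) ⬝ ε z)]
  _ = ((a ⬝ b) ⬝ ε z ⊹ (∻((a ⬝ b) ⬝ ε z) ⊹ (∻∻(a ⬝ ε z) ⊹ ∻(zᵛ)))) ⊹ zᵛ := by
        rw [nrev B (zᵛ) (∻(a ⬝ ε z))]
  _ = ((a ⬝ b) ⬝ ε z ⊹ (∻((a ⬝ b) ⬝ ε z) ⊹ (a ⬝ ε z ⊹ ∻(zᵛ)))) ⊹ zᵛ := by rw [nn B]
  _ = (a ⬝ b) ⬝ ε z ⊹ (∻((a ⬝ b) ⬝ ε z) ⊹ (a ⬝ ε z ⊹ (∻(zᵛ) ⊹ zᵛ))) := by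
        simp only [B.add_assoc]
  _ = (a ⬝ b) ⬝ ε z ⊹ (∻((a ⬝ b) ⬝ ε z) ⊹ (a ⬝ ε z ⊹ ε z)) := by rw [EEw]
  _ = (a ⬝ b) ⬝ ε z ⊹ (∻((a ⬝ b) ⬝ ε z) ⊹ a ⬝ ε z) := by rw [A2]
  _ = ((a ⬝ b) ⬝ ε z ⊹ ∻((a ⬝ b) ⬝ ε z)) ⊹ a ⬝ ε z := by simp only [B.add_assoc]
  _ = (∻((a ⬝ b) ⬝ ε z) ⊹ (a ⬝ b) ⬝ ε z) ⊹ a ⬝ ε z := by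
        rw [ffee B ((a ⬝ b) ⬝ ε z)]
  _ = ε ((a ⬝ b) ⬝ ε z) ⊹ a ⬝ ε z := by rw [← e_def B ((a ⬝ b) ⬝ ε z)]
  _ = bigE B z a b ⊹ a ⬝ ε z := by rw [eabez]

/-- `δ ⬝ z` -/
theorem c5 (hz' : ∀ x y : S, (x ⊹ y) ⬝ z = x ⬝ z ⊹ ∻z ⊹ y ⬝ z) : ((a ⬝ b ⊹ ∻(a ⬝ zᵛ)) ⊹ zᵛ) ⬝ z = (a ⬝ b) ⬝ z ⊹ ∻(a ⬝ ε z) := by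
  calc ((a ⬝ b ⊹ ∻(a ⬝ zᵛ)) ⊹ zᵛ) ⬝ z
      = (a ⬝ b ⊹ ∻(a ⬝ zᵛ)) ⬝ z ⊹ ∻z ⊹ zᵛ ⬝ z := hz' _ _
  _ = ((a ⬝ b) ⬝ z ⊹ ∻z ⊹ ∻(a ⬝ zᵛ) ⬝ z) ⊹ ∻z ⊹ ε z := by rw [hz', t_wz]
  _ = ((a ⬝ b) ⬝ z ⊹ ∻z ⊹ ((z ⊹ ∻(a ⬝ ε z)) ⊹ z)) ⊹ ∻z ⊹ ε z := by
        rw [dr_neg B hz' (a ⬝ zᵛ), B.mul_assoc a (zᵛ) z, t_wz]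
  _ = (a ⬝ b) ⬝ z ⊹ (∻z ⊹ (z ⊹ (∻(a ⬝ ε z) ⊹ (z ⊹ (∻z ⊹ ε z))))) := by
        simp only [B.add_assoc]
  _ = (a ⬝ b) ⬝ z ⊹ (∻z ⊹ (z ⊹ (∻(a ⬝ ε z) ⊹ (z ⊹ ∻z)))) := by rw [A9]
  _ = (a ⬝ b) ⬝ z ⊹ (∻z ⊹ (z ⊹ (∻(a ⬝ ε z) ⊹ ε z))) := by rw [FFz]
  _ = (a ⬝ b) ⬝ z ⊹ (∻z ⊹ (z ⊹ ∻(a ⬝ ε z))) := by rw [A3]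
  _ = (a ⬝ b) ⬝ z ⊹ ((∻z ⊹ z) ⊹ ∻(a ⬝ ε z)) := by simp only [B.add_assoc]
  _ = (a ⬝ b) ⬝ z ⊹ (ε z ⊹ ∻(a ⬝ ε z)) := by rw [← e_def B z]
  _ = (a ⬝ b) ⬝ z ⊹ ∻(a ⬝ ε z) := by rw [A4]

/-- first component of `r ∘ ř` equals `γ` -/
theorem c6 (hz' : ∀ x y : S, (x ⊹ y) ⬝ z = x ⬝ z ⊹ ∻z ⊹ y ⬝ z) :
    B.sigma z ((a ⬝ b ⊹ ∻(a ⬝ zᵛ)) ⊹ zᵛ) ((((a ⬝ b ⊹ ∻(a ⬝ zᵛ)) ⊹ zᵛ)ᵛ ⬝ a) ⬝ b)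
      = bigE B z a b ⊹ a ⬝ ε z := by
  show ∻(((a ⬝ b ⊹ ∻(a ⬝ zᵛ)) ⊹ zᵛ) ⬝ z)
      ⊹ (((a ⬝ b ⊹ ∻(a ⬝ zᵛ)) ⊹ zᵛ) ⬝ ((((a ⬝ b ⊹ ∻(a ⬝ zᵛ)) ⊹ zᵛ)ᵛ ⬝ a) ⬝ b)) ⬝ z
      = bigE B z a b ⊹ a ⬝ ε z
  rw [c8 B z a b, c5 B z a b hz']
  calc ∻((a ⬝ b) ⬝ z ⊹ ∻(a ⬝ ε z)) ⊹ ((a ⬝ b) ⬝ ε z) ⬝ z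
      = (∻∻(a ⬝ ε z) ⊹ ∻((a ⬝ b) ⬝ z)) ⊹ ((a ⬝ b) ⬝ ε z) ⬝ z := by
        rw [nrev B ((a ⬝ b) ⬝ z) (∻(a ⬝ ε z))]
  _ = (a ⬝ ε z ⊹ ∻((a ⬝ b) ⬝ z)) ⊹ (a ⬝ b) ⬝ z := by
        rw [nn B, B.mul_assoc (a ⬝ b) (ε z) z, e_mul B z]
  _ = a ⬝ ε z ⊹ (∻((a ⬝ b) ⬝ z) ⊹ (a ⬝ b) ⬝ z) := by simp only [B.add_assoc]
  _ = a ⬝ ε z ⊹ ε ((a ⬝ b) ⬝ z) := by rw [← e_def B ((a ⬝ b) ⬝ z)]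
  _ = a ⬝ ε z ⊹ bigE B z a b := by rw [eabz]
  _ = bigE B z a b ⊹ a ⬝ ε z := (acen B (aE B z a b) (a ⬝ ε z)).symm

/-- `γ ⬝ z` -/
theorem gam_z (hz' : ∀ x y : S, (x ⊹ y) ⬝ z = x ⬝ z ⊹ ∻z ⊹ y ⬝ z) : (bigE B z a b ⊹ a ⬝ ε z) ⬝ z = (z ⊹ bigE B z a b) ⊹ ∻z ⊹ a ⬝ z := by
  have hEz2 : bigE B z a b ⬝ z = z ⊹ bigE B z a b := by
    calc bigE B z a b ⬝ z = z ⬝ bigE B z a b := mcen B (mE B z a b) z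
    _ = z ⊹ ε z ⬝ bigE B z a b := mulg B (aE B z a b) z
    _ = z ⊹ bigE B z a b := by rw [hzE]
  calc (bigE B z a b ⊹ a ⬝ ε z) ⬝ z
      = bigE B z a b ⬝ z ⊹ ∻z ⊹ (a ⬝ ε z) ⬝ z := hz' _ _
  _ = (z ⊹ bigE B z a b) ⊹ ∻z ⊹ a ⬝ z := by
        rw [hEz2, B.mul_assoc a (ε z) z, e_mul B z]

/-- `γ ⬝ q2 = ab ⬝ ε z` -/
theorem gq2 :
    (bigE B z a b ⊹ a ⬝ ε z)
        ⬝ (((bigE B z a b ⊹ a ⬝ ε z)ᵛ ⬝ B.sigma z a b) ⬝ (((B.sigma z a b)ᵛ ⬝ a) ⬝ b))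
      = (a ⬝ b) ⬝ ε z := by
  calc (bigE B z a b ⊹ a ⬝ ε z)
        ⬝ (((bigE B z a b ⊹ a ⬝ ε z)ᵛ ⬝ B.sigma z a b) ⬝ (((B.sigma z a b)ᵛ ⬝ a) ⬝ b))
      = ((bigE B z a b ⊹ a ⬝ ε z) ⬝ (bigE B z a b ⊹ a ⬝ ε z)ᵛ)
          ⬝ (B.sigma z a b ⬝ ((B.sigma z a b)ᵛ ⬝ (a ⬝ b))) := by
        simp only [B.mul_assoc]
  _ = ε (bigE B z a b ⊹ a ⬝ ε z) ⬝ (B.sigma z a b ⬝ ((B.sigma z a b)ᵛ ⬝ (a ⬝ b))) := by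
        rw [← e_mul1 B]
  _ = bigE B z a b ⬝ ((a ⬝ b) ⬝ ε z) := by rw [eGamma, c1' B z a b]
  _ = (a ⬝ b) ⬝ ε z := hEabe B z a b

/-- first component of `r ∘ ř ∘ r` equals `σ` -/
theorem c12 (hz' : ∀ x y : S, (x ⊹ y) ⬝ z = x ⬝ z ⊹ ∻z ⊹ y ⬝ z) :
    B.sigma z (bigE B z a b ⊹ a ⬝ ε z)
        (((bigE B z a b ⊹ a ⬝ ε z)ᵛ ⬝ B.sigma z a b) ⬝ (((B.sigma z a b)ᵛ ⬝ a) ⬝ b))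
      = B.sigma z a b := by
  show ∻((bigE B z a b ⊹ a ⬝ ε z) ⬝ z)
      ⊹ ((bigE B z a b ⊹ a ⬝ ε z)
        ⬝ (((bigE B z a b ⊹ a ⬝ ε z)ᵛ ⬝ B.sigma z a b) ⬝ (((B.sigma z a b)ᵛ ⬝ a) ⬝ b))) ⬝ z
      = B.sigma z a b
  rw [gq2 B z a b, gam_z B z a b hz']
  show ∻((z ⊹ bigE B z a b) ⊹ ∻z ⊹ a ⬝ z) ⊹ ((a ⬝ b) ⬝ ε z) ⬝ z
      = ∻(a ⬝ z) ⊹ (a ⬝ b) ⬝ z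
  calc ∻((z ⊹ bigE B z a b) ⊹ ∻z ⊹ a ⬝ z) ⊹ ((a ⬝ b) ⬝ ε z) ⬝ z
      = (∻(a ⬝ z) ⊹ ∻((z ⊹ bigE B z a b) ⊹ ∻z)) ⊹ (a ⬝ b) ⬝ z := by
        rw [nrev B ((z ⊹ bigE B z a b) ⊹ ∻z) (a ⬝ z),
          B.mul_assoc (a ⬝ b) (ε z) z, e_mul B z]
  _ = (∻(a ⬝ z) ⊹ (∻∻z ⊹ ∻(z ⊹ bigE B z a b))) ⊹ (a ⬝ b) ⬝ z := by
        rw [nrev B (z ⊹ bigE B z a b) (∻z)]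
  _ = (∻(a ⬝ z) ⊹ (z ⊹ (∻(bigE B z a b) ⊹ ∻z))) ⊹ (a ⬝ b) ⬝ z := by
        rw [nn B, nrev B z (bigE B z a b)]
  _ = (∻(a ⬝ z) ⊹ (z ⊹ (bigE B z a b ⊹ ∻z))) ⊹ (a ⬝ b) ⬝ z := by rw [nE]
  _ = ∻(a ⬝ z) ⊹ (z ⊹ (bigE B z a b ⊹ (∻z ⊹ (a ⬝ b) ⬝ z))) := by
        simp only [B.add_assoc]
  _ = ∻(a ⬝ z) ⊹ (z ⊹ (∻z ⊹ (bigE B z a b ⊹ (a ⬝ b) ⬝ z))) := by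
        rw [aswapC B (aE B z a b) (∻z) ((a ⬝ b) ⬝ z)]
  _ = ∻(a ⬝ z) ⊹ (z ⊹ (∻z ⊹ (a ⬝ b) ⬝ z)) := by rw [A5]
  _ = ∻(a ⬝ z) ⊹ ((z ⊹ ∻z) ⊹ (a ⬝ b) ⬝ z) := by simp only [B.add_assoc]
  _ = ∻(a ⬝ z) ⊹ (ε z ⊹ (a ⬝ b) ⬝ z) := by rw [FFz]
  _ = ∻(a ⬝ z) ⊹ (a ⬝ b) ⬝ z := by rw [A6]

/-- second component of `r ∘ ř ∘ r` equals `τ` -/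
theorem c13 :
    ((B.sigma z a b)ᵛ ⬝ (bigE B z a b ⊹ a ⬝ ε z))
        ⬝ (((bigE B z a b ⊹ a ⬝ ε z)ᵛ ⬝ B.sigma z a b) ⬝ (((B.sigma z a b)ᵛ ⬝ a) ⬝ b))
      = ((B.sigma z a b)ᵛ ⬝ a) ⬝ b := by
  calc ((B.sigma z a b)ᵛ ⬝ (bigE B z a b ⊹ a ⬝ ε z))
        ⬝ (((bigE B z a b ⊹ a ⬝ ε z)ᵛ ⬝ B.sigma z a b) ⬝ (((B.sigma z a b)ᵛ ⬝ a) ⬝ b))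
      = (B.sigma z a b)ᵛ ⬝ ((bigE B z a b ⊹ a ⬝ ε z)
          ⬝ (((bigE B z a b ⊹ a ⬝ ε z)ᵛ ⬝ B.sigma z a b) ⬝ (((B.sigma z a b)ᵛ ⬝ a) ⬝ b))) := by
        simp only [B.mul_assoc]
  _ = (B.sigma z a b)ᵛ ⬝ ((a ⬝ b) ⬝ ε z) := by rw [gq2 B z a b]
  _ = (B.sigma z a b)ᵛ ⬝ (a ⬝ b) := sv_abs B z a b
  _ = ((B.sigma z a b)ᵛ ⬝ a) ⬝ b := by simp only [B.mul_assoc]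

end WithHz
end Brace6
end DWBAux
namespace DWBAux
open InvSg

variable {S : Type*} (B : DualWeakBrace S)

section Brace7

local infixl:65 " ⊹ " => B.add
local infixl:70 " ⬝ " => B.mul
local prefix:100 "∻" => B.neg
local postfix:max "ᵛ" => B.inv
local notation "ε" => ee B

variable (z a b : S)

theorem gam_w (hz' : ∀ x y : S, (x ⊹ y) ⬝ z = x ⬝ z ⊹ ∻z ⊹ y ⬝ z) :
    (bigE B z a b ⊹ a ⬝ ε z) ⬝ zᵛ = (zᵛ ⊹ bigE B z a b) ⊹ ∻(zᵛ) ⊹ a ⬝ zᵛ := by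
  have hw := dr_inv B hz'
  have hEw : bigE B z a b ⬝ zᵛ = zᵛ ⊹ bigE B z a b := by
    calc bigE B z a b ⬝ zᵛ = zᵛ ⬝ bigE B z a b := mcen B (mE B z a b) (zᵛ)
    _ = zᵛ ⊹ ε (zᵛ) ⬝ bigE B z a b := mulg B (aE B z a b) (zᵛ)
    _ = zᵛ ⊹ bigE B z a b := by rw [e_invx B, hzE]
  calc (bigE B z a b ⊹ a ⬝ ε z) ⬝ zᵛ
      = bigE B z a b ⬝ zᵛ ⊹ ∻(zᵛ) ⊹ (a ⬝ ε z) ⬝ zᵛ := hw _ _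
  _ = (zᵛ ⊹ bigE B z a b) ⊹ ∻(zᵛ) ⊹ a ⬝ zᵛ := by
        rw [hEw, B.mul_assoc a (ε z) (zᵛ), t_ez_w]

theorem gq3 :
    (bigE B z a b ⊹ a ⬝ ε z)
        ⬝ (((bigE B z a b ⊹ a ⬝ ε z)ᵛ ⬝ ((a ⬝ b ⊹ ∻(a ⬝ zᵛ)) ⊹ zᵛ))
            ⬝ ((((a ⬝ b ⊹ ∻(a ⬝ zᵛ)) ⊹ zᵛ)ᵛ ⬝ a) ⬝ b))
      = (a ⬝ b) ⬝ ε z := by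
  calc (bigE B z a b ⊹ a ⬝ ε z)
        ⬝ (((bigE B z a b ⊹ a ⬝ ε z)ᵛ ⬝ ((a ⬝ b ⊹ ∻(a ⬝ zᵛ)) ⊹ zᵛ))
            ⬝ ((((a ⬝ b ⊹ ∻(a ⬝ zᵛ)) ⊹ zᵛ)ᵛ ⬝ a) ⬝ b))
      = ((bigE B z a b ⊹ a ⬝ ε z) ⬝ (bigE B z a b ⊹ a ⬝ ε z)ᵛ)
          ⬝ (((a ⬝ b ⊹ ∻(a ⬝ zᵛ)) ⊹ zᵛ) ⬝ (((a ⬝ b ⊹ ∻(a ⬝ zᵛ)) ⊹ zᵛ)ᵛ ⬝ (a ⬝ b))) := by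
        simp only [B.mul_assoc]
  _ = ε (bigE B z a b ⊹ a ⬝ ε z)
        ⬝ (((a ⬝ b ⊹ ∻(a ⬝ zᵛ)) ⊹ zᵛ) ⬝ (((a ⬝ b ⊹ ∻(a ⬝ zᵛ)) ⊹ zᵛ)ᵛ ⬝ (a ⬝ b))) := by
        rw [← e_mul1 B]
  _ = bigE B z a b ⬝ ((a ⬝ b) ⬝ ε z) := by rw [eGamma, c8' B z a b]
  _ = (a ⬝ b) ⬝ ε z := hEabe B z a b

theorem c15 (hz' : ∀ x y : S, (x ⊹ y) ⬝ z = x ⬝ z ⊹ ∻z ⊹ y ⬝ z) :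
    ((bigE B z a b ⊹ a ⬝ ε z)
        ⬝ (((bigE B z a b ⊹ a ⬝ ε z)ᵛ ⬝ ((a ⬝ b ⊹ ∻(a ⬝ zᵛ)) ⊹ zᵛ))
            ⬝ ((((a ⬝ b ⊹ ∻(a ⬝ zᵛ)) ⊹ zᵛ)ᵛ ⬝ a) ⬝ b))
      ⊹ ∻((bigE B z a b ⊹ a ⬝ ε z) ⬝ zᵛ)) ⊹ zᵛ
      = (a ⬝ b ⊹ ∻(a ⬝ zᵛ)) ⊹ zᵛ := by
  rw [gq3 B z a b, gam_w B z a b hz']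
  calc ((a ⬝ b) ⬝ ε z ⊹ ∻((zᵛ ⊹ bigE B z a b) ⊹ ∻(zᵛ) ⊹ a ⬝ zᵛ)) ⊹ zᵛ
      = ((a ⬝ b) ⬝ ε z ⊹ (∻(a ⬝ zᵛ) ⊹ ∻((zᵛ ⊹ bigE B z a b) ⊹ ∻(zᵛ)))) ⊹ zᵛ := by
        rw [nrev B ((zᵛ ⊹ bigE B z a b) ⊹ ∻(zᵛ)) (a ⬝ zᵛ)]
  _ = ((a ⬝ b) ⬝ ε z ⊹ (∻(a ⬝ zᵛ) ⊹ (∻∻(zᵛ) ⊹ ∻(zᵛ ⊹ bigE B z a b)))) ⊹ zᵛ := by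
        rw [nrev B (zᵛ ⊹ bigE B z a b) (∻(zᵛ))]
  _ = ((a ⬝ b) ⬝ ε z ⊹ (∻(a ⬝ zᵛ) ⊹ (zᵛ ⊹ (∻(bigE B z a b) ⊹ ∻(zᵛ))))) ⊹ zᵛ := by
        rw [nn B, nrev B (zᵛ) (bigE B z a b)]
  _ = ((a ⬝ b) ⬝ ε z ⊹ (∻(a ⬝ zᵛ) ⊹ (zᵛ ⊹ (bigE B z a b ⊹ ∻(zᵛ))))) ⊹ zᵛ := by rw [nE]
  _ = (a ⬝ b) ⬝ ε z ⊹ (∻(a ⬝ zᵛ) ⊹ (zᵛ ⊹ (bigE B z a b ⊹ (∻(zᵛ) ⊹ zᵛ)))) := by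
        simp only [B.add_assoc]
  _ = (a ⬝ b) ⬝ ε z ⊹ (∻(a ⬝ zᵛ) ⊹ (zᵛ ⊹ (bigE B z a b ⊹ ε z))) := by rw [EEw]
  _ = (a ⬝ b) ⬝ ε z ⊹ (∻(a ⬝ zᵛ) ⊹ (zᵛ ⊹ bigE B z a b)) := by rw [A8]
  _ = (a ⬝ b ⊹ bigE B z a b) ⊹ (∻(a ⬝ zᵛ) ⊹ (zᵛ ⊹ bigE B z a b)) := by rw [ab_e]
  _ = a ⬝ b ⊹ (bigE B z a b ⊹ (∻(a ⬝ zᵛ) ⊹ (zᵛ ⊹ bigE B z a b))) := by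
        simp only [B.add_assoc]
  _ = a ⬝ b ⊹ (∻(a ⬝ zᵛ) ⊹ (bigE B z a b ⊹ (zᵛ ⊹ bigE B z a b))) := by
        rw [aswapC B (aE B z a b) (∻(a ⬝ zᵛ)) (zᵛ ⊹ bigE B z a b)]
  _ = a ⬝ b ⊹ (∻(a ⬝ zᵛ) ⊹ (zᵛ ⊹ (bigE B z a b ⊹ bigE B z a b))) := by
        rw [aswapC B (aE B z a b) (zᵛ) (bigE B z a b)]
  _ = a ⬝ b ⊹ (∻(a ⬝ zᵛ) ⊹ (zᵛ ⊹ bigE B z a b)) := by rw [aE]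
  _ = ((a ⬝ b ⊹ ∻(a ⬝ zᵛ)) ⊹ zᵛ) ⊹ bigE B z a b := by simp only [B.add_assoc]
  _ = (a ⬝ b ⊹ ∻(a ⬝ zᵛ)) ⊹ zᵛ := A7 B z a b

theorem c16 :
    (((a ⬝ b ⊹ ∻(a ⬝ zᵛ)) ⊹ zᵛ)ᵛ ⬝ (bigE B z a b ⊹ a ⬝ ε z))
        ⬝ (((bigE B z a b ⊹ a ⬝ ε z)ᵛ ⬝ ((a ⬝ b ⊹ ∻(a ⬝ zᵛ)) ⊹ zᵛ))
            ⬝ ((((a ⬝ b ⊹ ∻(a ⬝ zᵛ)) ⊹ zᵛ)ᵛ ⬝ a) ⬝ b))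
      = (((a ⬝ b ⊹ ∻(a ⬝ zᵛ)) ⊹ zᵛ)ᵛ ⬝ a) ⬝ b := by
  calc (((a ⬝ b ⊹ ∻(a ⬝ zᵛ)) ⊹ zᵛ)ᵛ ⬝ (bigE B z a b ⊹ a ⬝ ε z))
        ⬝ (((bigE B z a b ⊹ a ⬝ ε z)ᵛ ⬝ ((a ⬝ b ⊹ ∻(a ⬝ zᵛ)) ⊹ zᵛ))
            ⬝ ((((a ⬝ b ⊹ ∻(a ⬝ zᵛ)) ⊹ zᵛ)ᵛ ⬝ a) ⬝ b))
      = ((a ⬝ b ⊹ ∻(a ⬝ zᵛ)) ⊹ zᵛ)ᵛ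
          ⬝ ((bigE B z a b ⊹ a ⬝ ε z)
            ⬝ (((bigE B z a b ⊹ a ⬝ ε z)ᵛ ⬝ ((a ⬝ b ⊹ ∻(a ⬝ zᵛ)) ⊹ zᵛ))
                ⬝ ((((a ⬝ b ⊹ ∻(a ⬝ zᵛ)) ⊹ zᵛ)ᵛ ⬝ a) ⬝ b))) := by
        simp only [B.mul_assoc]
  _ = ((a ⬝ b ⊹ ∻(a ⬝ zᵛ)) ⊹ zᵛ)ᵛ ⬝ ((a ⬝ b) ⬝ ε z) := by rw [gq3 B z a b]
  _ = ((a ⬝ b ⊹ ∻(a ⬝ zᵛ)) ⊹ zᵛ)ᵛ ⬝ (a ⬝ b) := dv_abs B z a b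
  _ = (((a ⬝ b ⊹ ∻(a ⬝ zᵛ)) ⊹ zᵛ)ᵛ ⬝ a) ⬝ b := by simp only [B.mul_assoc]

theorem c7 :
    ((bigE B z a b ⊹ a ⬝ ε z)ᵛ ⬝ B.sigma z a b) ⬝ (((B.sigma z a b)ᵛ ⬝ a) ⬝ b)
      = ((bigE B z a b ⊹ a ⬝ ε z)ᵛ ⬝ ((a ⬝ b ⊹ ∻(a ⬝ zᵛ)) ⊹ zᵛ))
          ⬝ ((((a ⬝ b ⊹ ∻(a ⬝ zᵛ)) ⊹ zᵛ)ᵛ ⬝ a) ⬝ b) := by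
  calc ((bigE B z a b ⊹ a ⬝ ε z)ᵛ ⬝ B.sigma z a b) ⬝ (((B.sigma z a b)ᵛ ⬝ a) ⬝ b)
      = (bigE B z a b ⊹ a ⬝ ε z)ᵛ ⬝ (B.sigma z a b ⬝ ((B.sigma z a b)ᵛ ⬝ (a ⬝ b))) := by
        simp only [B.mul_assoc]
  _ = (bigE B z a b ⊹ a ⬝ ε z)ᵛ ⬝ ((a ⬝ b) ⬝ ε z) := by rw [c1' B z a b]
  _ = (bigE B z a b ⊹ a ⬝ ε z)ᵛ
        ⬝ (((a ⬝ b ⊹ ∻(a ⬝ zᵛ)) ⊹ zᵛ) ⬝ (((a ⬝ b ⊹ ∻(a ⬝ zᵛ)) ⊹ zᵛ)ᵛ ⬝ (a ⬝ b))) := by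
        rw [c8' B z a b]
  _ = ((bigE B z a b ⊹ a ⬝ ε z)ᵛ ⬝ ((a ⬝ b ⊹ ∻(a ⬝ zᵛ)) ⊹ zᵛ))
        ⬝ ((((a ⬝ b ⊹ ∻(a ⬝ zᵛ)) ⊹ zᵛ)ᵛ ⬝ a) ⬝ b) := by simp only [B.mul_assoc]

end Brace7
end DWBAux


/-- For `z ∈ D_r(S)`, `r_z ř_{z⁻} r_z = r_z`, `ř_{z⁻} r_z ř_{z⁻} = ř_{z⁻}` and
`r_z ř_{z⁻} = ř_{z⁻} r_z`, i.e. `r_z` is completely regular in `Map(S × S)`. -/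
theorem statement7 {S : Type*} (B : DualWeakBrace S) (z : S) (hz : z ∈ B.Dr) :
    B.rz z ∘ B.rcheck (B.inv z) ∘ B.rz z = B.rz z ∧
      B.rcheck (B.inv z) ∘ B.rz z ∘ B.rcheck (B.inv z) = B.rcheck (B.inv z) ∧
      B.rz z ∘ B.rcheck (B.inv z) = B.rcheck (B.inv z) ∘ B.rz z := by
  have hz' : ∀ x y : S, B.mul (B.add x y) z
      = B.add (B.add (B.mul x z) (B.neg z)) (B.mul y z) := hz
  refine ⟨?_, ?_, ?_⟩
  · funext p
    obtain ⟨a, b⟩ := p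
    show B.rz z (B.rcheck (B.inv z) (B.rz z (a, b))) = B.rz z (a, b)
    simp only [DualWeakBrace.rz, DualWeakBrace.rcheck, DualWeakBrace.tau]
    rw [DWBAux.c3 B z a b hz', DWBAux.c12 B z a b hz', Prod.mk.injEq]
    exact ⟨rfl, DWBAux.c13 B z a b⟩
  · funext p
    obtain ⟨a, b⟩ := p
    show B.rcheck (B.inv z) (B.rz z (B.rcheck (B.inv z) (a, b))) = B.rcheck (B.inv z) (a, b)
    simp only [DualWeakBrace.rz, DualWeakBrace.rcheck, DualWeakBrace.tau]
    rw [DWBAux.c6 B z a b hz', DWBAux.c15 B z a b hz', Prod.mk.injEq]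
    exact ⟨rfl, DWBAux.c16 B z a b⟩
  · funext p
    obtain ⟨a, b⟩ := p
    show B.rz z (B.rcheck (B.inv z) (a, b)) = B.rcheck (B.inv z) (B.rz z (a, b))
    simp only [DualWeakBrace.rz, DualWeakBrace.rcheck, DualWeakBrace.tau]
    rw [DWBAux.c6 B z a b hz', DWBAux.c3 B z a b hz', Prod.mk.injEq]
    exact ⟨rfl, (DWBAux.c7 B z a b).symm⟩
end

section
/- Let (S, +, ∘) be a dual weak brace and z ∈ S. The map σ^z : (S,∘) → Map(S) sending a to σ_a^z, where σ_a^z(b) = -a∘z + a∘b∘z, is a semigroup homomorphism (i.e., σ^z_a ∘ σ^z_b = σ^z_{a∘b} for all a,b) if and only if a ∘ z = z + a for every a ∈ S. -/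
/-- Generic inverse semigroup packaged. -/
structure InvSg (S : Type*) where
  op : S → S → S
  iv : S → S
  assoc : ∀ a b c, op (op a b) c = op a (op b c)
  reg : ∀ a, op (op a (iv a)) a = a
  reg' : ∀ a, op (op (iv a) a) (iv a) = iv a
  uniq : ∀ a b, op (op a b) a = a → op (op b a) b = b → b = iv a

namespace InvSg
variable {S : Type*} (M : InvSg S)

theorem iv_iv (a : S) : M.iv (M.iv a) = a :=
  (M.uniq (M.iv a) a (M.reg' a) (M.reg a)).symm

theorem idem_iv {e : S} (he : M.op e e = e) : M.iv e = e :=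
  (M.uniq e e (by rw [he]; exact he) (by rw [he]; exact he)).symm

/-- a ⋆ (a⁻ ⋆ a) = a -/
theorem eR (a : S) : M.op a (M.op (M.iv a) a) = a := by
  rw [← M.assoc]; exact M.reg a

/-- a⁻ ⋆ (a ⋆ a⁻) = a⁻ -/
theorem eR' (a : S) : M.op (M.iv a) (M.op a (M.iv a)) = M.iv a := by
  rw [← M.assoc]; exact M.reg' a

/-- (a⁻ ⋆ a) idempotent -/
theorem idem_e (a : S) :
    M.op (M.op (M.iv a) a) (M.op (M.iv a) a) = M.op (M.iv a) a := by
  rw [← M.assoc, M.reg']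

/-- (a ⋆ a⁻) idempotent -/
theorem idem_f (a : S) :
    M.op (M.op a (M.iv a)) (M.op a (M.iv a)) = M.op a (M.iv a) := by
  rw [← M.assoc, M.reg]

/-- context form of idempotency -/
theorem dup {e : S} (he : M.op e e = e) (t : S) :
    M.op e (M.op e t) = M.op e t := by rw [← M.assoc, he]

/-- context form of reg: a ⋆ (a⁻ ⋆ (a ⋆ t)) = a ⋆ t -/
theorem regC (a t : S) : M.op a (M.op (M.iv a) (M.op a t)) = M.op a t := by
  rw [← M.assoc, ← M.assoc, M.reg]

theorem regC' (a t : S) : M.op (M.iv a) (M.op a (M.op (M.iv a) t)) = M.op (M.iv a) t := by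
  rw [← M.assoc, ← M.assoc, M.reg']

theorem sq_idem {e f : S} (he : M.op e e = e) (hf : M.op f f = f) :
    M.op (M.op e f) (M.op e f) = M.op e f := by
  -- let s := e⋆f, x := iv s, y := f⋆(x⋆e); show y inverse of s, y idem, conclude x = y idem, s = x.
  set x := M.iv (M.op e f) with hx
  have c1 : M.op (M.op (M.op e f) (M.op f (M.op x e))) (M.op e f) = M.op e f := by
    have h := M.reg (M.op e f)
    simp only [M.assoc] at h ⊢
    rw [dup M hf, dup M he]
    simpa [M.assoc] using h
  have c2 : M.op (M.op (M.op f (M.op x e)) (M.op e f)) (M.op f (M.op x e))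
      = M.op f (M.op x e) := by
    have h2 := M.regC' (M.op e f) e
    simp only [M.assoc] at h2 ⊢
    rw [dup M he, dup M hf]
    rw [h2]
  have hyx : M.op f (M.op x e) = x := M.uniq (M.op e f) _ c1 c2
  have hyidem : M.op (M.op f (M.op x e)) (M.op f (M.op x e)) = M.op f (M.op x e) := by
    have h2 := M.regC' (M.op e f) e
    simp only [M.assoc] at h2 ⊢
    rw [h2]
  have hxidem : M.op x x = x := by rw [← hyx]; exact hyidem
  have hiv : M.iv x = x := idem_iv M hxidem
  have hsx : M.op e f = M.iv x := M.uniq x (M.op e f) (M.reg' (M.op e f)) (M.reg (M.op e f))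
  rw [hsx, hiv]; exact hxidem

theorem idem_comm {e f : S} (he : M.op e e = e) (hf : M.op f f = f) :
    M.op e f = M.op f e := by
  have hef := M.sq_idem he hf
  have hfe := M.sq_idem hf he
  have c1 : M.op (M.op (M.op e f) (M.op f e)) (M.op e f) = M.op e f := by
    have h := hef
    simp only [M.assoc] at h ⊢
    rw [dup M hf, dup M he, h]
  have c2 : M.op (M.op (M.op f e) (M.op e f)) (M.op f e) = M.op f e := by
    have h := hfe
    simp only [M.assoc] at h ⊢
    rw [dup M he, dup M hf, h]
  have := M.uniq (M.op e f) (M.op f e) c1 c2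
  rw [this, idem_iv M hef]

theorem iv_op (a b : S) : M.iv (M.op a b) = M.op (M.iv b) (M.iv a) := by
  have comm := M.idem_comm (M.idem_f b) (M.idem_e a)
  have c1 : M.op (M.op (M.op a b) (M.op (M.iv b) (M.iv a))) (M.op a b) = M.op a b := by
    have h1 : M.op (M.op (M.op a b) (M.op (M.iv b) (M.iv a))) (M.op a b)
        = M.op (M.op a (M.op (M.op b (M.iv b)) (M.op (M.iv a) a))) b := by
      simp only [M.assoc]
    rw [h1, comm]
    have h2 : M.op (M.op a (M.op (M.op (M.iv a) a) (M.op b (M.iv b)))) b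
        = M.op (M.op a (M.op (M.iv a) a)) (M.op (M.op b (M.iv b)) b) := by
      simp only [M.assoc]
    rw [h2, M.eR, M.reg]
  have c2 : M.op (M.op (M.op (M.iv b) (M.iv a)) (M.op a b)) (M.op (M.iv b) (M.iv a))
      = M.op (M.iv b) (M.iv a) := by
    have h1 : M.op (M.op (M.op (M.iv b) (M.iv a)) (M.op a b)) (M.op (M.iv b) (M.iv a))
        = M.op (M.op (M.iv b) (M.op (M.op (M.iv a) a) (M.op b (M.iv b)))) (M.iv a) := by
      simp only [M.assoc]
    rw [h1, ← comm]
    have h2 : M.op (M.op (M.iv b) (M.op (M.op b (M.iv b)) (M.op (M.iv a) a))) (M.iv a)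
        = M.op (M.op (M.iv b) (M.op b (M.iv b))) (M.op (M.op (M.iv a) a) (M.iv a)) := by
      simp only [M.assoc]
    rw [h2, M.eR', M.reg']
  exact (M.uniq _ _ c1 c2).symm

/-- Clifford ⇒ idempotents central. -/
theorem central (cliff : ∀ a, M.op a (M.iv a) = M.op (M.iv a) a)
    {e : S} (he : M.op e e = e) (a : S) : M.op e a = M.op a e := by
  have hA : M.iv (M.op a e) = M.op e (M.iv a) := by
    rw [M.iv_op, idem_iv M he]
  have hB := cliff (M.op a e)
  rw [hA] at hB
  -- hB : (a⋆e)⋆(e⋆a⁻) = (e⋆a⁻)⋆(a⋆e)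
  have hB2 : M.op a (M.op e (M.iv a)) = M.op e (M.op a (M.iv a)) := by
    have l : M.op (M.op a e) (M.op e (M.iv a)) = M.op a (M.op e (M.iv a)) := by
      simp only [M.assoc]; rw [dup M he]
    have r : M.op (M.op e (M.iv a)) (M.op a e) = M.op e (M.op a (M.iv a)) := by
      have : M.op (M.op e (M.iv a)) (M.op a e)
          = M.op e (M.op (M.op (M.iv a) a) e) := by simp only [M.assoc]
      rw [this, M.idem_comm (M.idem_e a) he, ← M.assoc, ← M.assoc, he, M.assoc, cliff a]
    rw [← l, ← r, hB]
  calc M.op e a = M.op e (M.op a (M.op (M.iv a) a)) := by rw [M.eR]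
    _ = M.op (M.op e (M.op a (M.iv a))) a := by simp only [M.assoc]
    _ = M.op (M.op a (M.op e (M.iv a))) a := by rw [← hB2]
    _ = M.op a (M.op e (M.op (M.iv a) a)) := by simp only [M.assoc]
    _ = M.op a (M.op (M.op (M.iv a) a) e) := by rw [M.idem_comm he (M.idem_e a)]
    _ = M.op a e := by simp only [M.assoc]; rw [M.regC]

end InvSg

namespace DualWeakBrace
variable {S : Type*} (B : DualWeakBrace S)

def A : InvSg S := ⟨B.add, B.neg, B.add_assoc, B.add_reg, B.neg_reg, B.neg_unique⟩
def M : InvSg S := ⟨B.mul, B.inv, B.mul_assoc, B.mul_reg, B.inv_reg, B.inv_unique⟩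

theorem nn (a : S) : B.neg (B.neg a) = a := (A B).iv_iv a
theorem ii (a : S) : B.inv (B.inv a) = a := (M B).iv_iv a
theorem negadd (a b : S) : B.neg (B.add a b) = B.add (B.neg b) (B.neg a) := (A B).iv_op a b
theorem invmul (a b : S) : B.inv (B.mul a b) = B.mul (B.inv b) (B.inv a) := (M B).iv_op a b
theorem addIdemComm {e f : S} (he : B.add e e = e) (hf : B.add f f = f) :
    B.add e f = B.add f e := (A B).idem_comm he hf
theorem aIdem_e (a : S) : B.add (B.add (B.neg a) a) (B.add (B.neg a) a) = B.add (B.neg a) a :=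
  (A B).idem_e a
theorem aIdem_f (a : S) : B.add (B.add a (B.neg a)) (B.add a (B.neg a)) = B.add a (B.neg a) :=
  (A B).idem_f a
theorem a_eR (a : S) : B.add a (B.add (B.neg a) a) = a := (A B).eR a
theorem a_eR' (a : S) : B.add (B.neg a) (B.add a (B.neg a)) = B.neg a := (A B).eR' a
theorem negIdem {e : S} (he : B.add e e = e) : B.neg e = e := (A B).idem_iv he
theorem addSq {e f : S} (he : B.add e e = e) (hf : B.add f f = f) :
    B.add (B.add e f) (B.add e f) = B.add e f := (A B).sq_idem he hf

/-- every additive idempotent is a multiplicative idempotent -/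
theorem mulIdem {e : S} (he : B.add e e = e) : B.mul e e = e := by
  have hne : B.neg e = e := negIdem B he
  have h1 : B.mul e (B.inv e) = e := by rw [B.weak, hne, he]
  have h2 := B.mul_reg e
  rw [h1] at h2; exact h2

theorem invIdem {e : S} (he : B.add e e = e) : B.inv e = e := (M B).idem_iv (mulIdem B he)

/-- additive idempotents are ∘-central -/
theorem cent {e : S} (he : B.add e e = e) (x : S) : B.mul e x = B.mul x e :=
  (M B).central B.clifford (mulIdem B he) x

/-- L2: -(a∘b) + a = -a + a∘(-b) -/
theorem L2 (a b : S) :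
    B.add (B.neg (B.mul a b)) a = B.add (B.neg a) (B.mul a (B.neg b)) := by
  have c1 : B.add (B.add (B.add (B.neg a) (B.mul a b))
      (B.add (B.neg a) (B.mul a (B.neg b)))) (B.add (B.neg a) (B.mul a b))
      = B.add (B.neg a) (B.mul a b) := by
    have h := B.dist a (B.add b (B.neg b)) b
    rw [B.add_reg] at h
    rw [B.dist] at h
    simp only [B.add_assoc] at h ⊢
    rw [← h]
  have c2 : B.add (B.add (B.add (B.neg a) (B.mul a (B.neg b)))
      (B.add (B.neg a) (B.mul a b))) (B.add (B.neg a) (B.mul a (B.neg b)))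
      = B.add (B.neg a) (B.mul a (B.neg b)) := by
    have h := B.dist a (B.add (B.neg b) b) (B.neg b)
    rw [B.neg_reg] at h
    rw [B.dist] at h
    simp only [B.add_assoc] at h ⊢
    rw [← h]
  have hy := B.neg_unique _ _ c1 c2
  have hh : B.neg (B.add (B.neg a) (B.mul a b)) = B.add (B.neg (B.mul a b)) a := by
    rw [negadd, nn]
  rw [hh] at hy
  exact hy.symm

/-- e_{a∘b} = (a∘e_b)∘a⁻ -/
theorem e_mul (a b : S) : B.add (B.neg (B.mul a b)) (B.mul a b)
    = B.mul (B.mul a (B.add (B.neg b) b)) (B.inv a) := by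
  have h := B.weak (B.mul a b)
  rw [invmul] at h
  rw [← h, ← B.weak b]
  simp only [B.mul_assoc]

/-- K2 : e∘(-b + b) = -(e∘b) + (e∘b) for +idempotent e -/
theorem K2 {e : S} (he : B.add e e = e) (b : S) :
    B.mul e (B.add (B.neg b) b) = B.add (B.neg (B.mul e b)) (B.mul e b) := by
  have h := e_mul B e b
  rw [invIdem B he] at h
  rw [B.mul_assoc, cent B (aIdem_e B b) e, ← B.mul_assoc, mulIdem B he] at h
  exact h.symm

/-- E1 : e + (-(e∘b)) = -(e∘b) -/
theorem E1 {e : S} (he : B.add e e = e) (b : S) :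
    B.add e (B.neg (B.mul e b)) = B.neg (B.mul e b) := by
  have h := B.dist e b (B.add (B.neg b) b)
  rw [a_eR] at h
  rw [negIdem B he, K2 B he] at h
  -- h : e∘b = (e∘b + e) + (-(e∘b) + e∘b)
  have c1 : B.add (B.add (B.mul e b) (B.add e (B.neg (B.mul e b)))) (B.mul e b)
      = B.mul e b := by
    simp only [B.add_assoc] at h ⊢
    exact h.symm
  have c2 : B.add (B.add (B.add e (B.neg (B.mul e b))) (B.mul e b))
      (B.add e (B.neg (B.mul e b))) = B.add e (B.neg (B.mul e b)) := by
    calc B.add (B.add (B.add e (B.neg (B.mul e b))) (B.mul e b))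
          (B.add e (B.neg (B.mul e b)))
        = B.add (B.add e (B.add (B.add (B.neg (B.mul e b)) (B.mul e b)) e))
          (B.neg (B.mul e b)) := by simp only [B.add_assoc]
      _ = B.add (B.add e (B.add e (B.add (B.neg (B.mul e b)) (B.mul e b))))
          (B.neg (B.mul e b)) := by rw [addIdemComm B (aIdem_e B (B.mul e b)) he]
      _ = B.add (B.add (B.add e e) (B.add (B.neg (B.mul e b)) (B.mul e b)))
          (B.neg (B.mul e b)) := by simp only [B.add_assoc]
      _ = B.add (B.add e (B.add (B.neg (B.mul e b)) (B.mul e b)))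
          (B.neg (B.mul e b)) := by rw [he]
      _ = B.add e (B.neg (B.mul e b)) := by rw [B.add_assoc, B.neg_reg]
  exact B.neg_unique _ _ c1 c2

/-- K10 : (e∘b) + e = e∘b -/
theorem K10 {e : S} (he : B.add e e = e) (b : S) :
    B.add (B.mul e b) e = B.mul e b := by
  have h := congrArg B.neg (E1 B he b)
  rw [negadd, nn, negIdem B he] at h
  exact h


theorem invIdemM {e : S} (h : B.mul e e = e) : B.inv e = e := (M B).idem_iv h

/-- E-idem : e∘d = e + d for additive idempotents -/
theorem Eidem {e d : S} (he : B.add e e = e) (hd : B.add d d = d) :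
    B.mul e d = B.add e d := by
  have hpm : B.mul (B.mul e d) (B.mul e d) = B.mul e d := by
    calc B.mul (B.mul e d) (B.mul e d)
        = B.mul e (B.mul (B.mul d e) d) := by simp only [B.mul_assoc]
      _ = B.mul e (B.mul (B.mul e d) d) := by rw [← cent B he d]
      _ = B.mul (B.mul e e) (B.mul d d) := by simp only [B.mul_assoc]
      _ = B.mul e d := by rw [mulIdem B he, mulIdem B hd]
  have hw := B.weak (B.mul e d)
  rw [invIdemM B hpm, hpm] at hw
  have hpp : B.add (B.mul e d) (B.mul e d) = B.mul e d := by
    conv_lhs => rw [hw]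
    rw [aIdem_e B (B.mul e d)]
    exact hw.symm
  have hep : B.add e (B.mul e d) = B.mul e d := by
    have h1 := E1 B he d
    rw [negIdem B hpp] at h1
    exact h1
  have hdp : B.add d (B.mul e d) = B.mul e d := by
    have h1 := E1 B hd e
    rw [← cent B he d, negIdem B hpp] at h1
    exact h1
  have q1 : B.mul (B.add e d) e = B.mul e d := by
    rw [← cent B he (B.add e d), B.dist, mulIdem B he, negIdem B he, he, hep]
  have q2 : B.mul (B.add e d) d = B.mul e d := by
    rw [← cent B hd (B.add e d), B.dist, mulIdem B hd, negIdem B hd, ← cent B he d]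
    rw [B.add_assoc, hd, addIdemComm B hpp hd, hdp]
  have hkey := mulIdem B (addSq B he hd)
  rw [B.dist, q1, q2, negadd, negIdem B he, negIdem B hd] at hkey
  rw [← B.add_assoc, addIdemComm B hpp hd, hdp, addIdemComm B hpp he, hep, hpp] at hkey
  exact hkey


/-- ∘-idempotent absorbs on left: e_b ∘ b = b where e_b = -b+b -/
theorem eb_mul (b : S) : B.mul (B.add (B.neg b) b) b = b := by
  rw [← B.weak b]; exact B.mul_reg b

/-- T3 : e + e∘b = e∘b -/
theorem T3 {e : S} (he : B.add e e = e) (b : S) :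
    B.add e (B.mul e b) = B.mul e b := by
  have he_b : B.add (B.add (B.neg b) b) (B.add (B.neg b) b) = B.add (B.neg b) b :=
    aIdem_e B b
  have ht : B.mul (B.add (B.neg b) b) (B.mul e b) = B.mul e b := by
    rw [← B.mul_assoc, cent B he_b e, B.mul_assoc, eb_mul]
  have F1 : B.add (B.add (B.neg b) b) (B.neg (B.mul e b)) = B.neg (B.mul e b) := by
    have h := E1 B he_b (B.mul e b)
    rw [ht] at h
    exact h
  have F2 : B.add (B.mul e (B.neg b)) (B.mul e b) = B.add e (B.add (B.neg b) b) := by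
    have h := B.dist e (B.neg b) b
    rw [negIdem B he, K10 B he (B.neg b), Eidem B he he_b] at h
    exact h.symm
  have L2e : B.add (B.neg (B.mul e b)) e = B.add e (B.mul e (B.neg b)) := by
    have h := L2 B e b
    rw [negIdem B he] at h
    exact h
  have c1 : B.add (B.add (B.add e (B.mul e b)) (B.neg (B.mul e b)))
      (B.add e (B.mul e b)) = B.add e (B.mul e b) := by
    calc B.add (B.add (B.add e (B.mul e b)) (B.neg (B.mul e b))) (B.add e (B.mul e b))
        = B.add (B.add e (B.add (B.add (B.mul e b) (B.neg (B.mul e b))) e)) (B.mul e b) := by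
          simp only [B.add_assoc]
      _ = B.add (B.add e (B.add e (B.add (B.mul e b) (B.neg (B.mul e b))))) (B.mul e b) := by
          rw [addIdemComm B (aIdem_f B (B.mul e b)) he]
      _ = B.add (B.add (B.add e e) (B.add (B.mul e b) (B.neg (B.mul e b)))) (B.mul e b) := by
          simp only [B.add_assoc]
      _ = B.add (B.add e (B.add (B.mul e b) (B.neg (B.mul e b)))) (B.mul e b) := by rw [he]
      _ = B.add e (B.mul e b) := by rw [B.add_assoc, B.add_reg]
  have c2 : B.add (B.add (B.neg (B.mul e b)) (B.add e (B.mul e b)))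
      (B.neg (B.mul e b)) = B.neg (B.mul e b) := by
    calc B.add (B.add (B.neg (B.mul e b)) (B.add e (B.mul e b))) (B.neg (B.mul e b))
        = B.add (B.add (B.add (B.neg (B.mul e b)) e) (B.mul e b)) (B.neg (B.mul e b)) := by
          simp only [B.add_assoc]
      _ = B.add (B.add (B.add e (B.mul e (B.neg b))) (B.mul e b)) (B.neg (B.mul e b)) := by
          rw [L2e]
      _ = B.add (B.add e (B.add (B.mul e (B.neg b)) (B.mul e b))) (B.neg (B.mul e b)) := by
          simp only [B.add_assoc]
      _ = B.add (B.add e (B.add e (B.add (B.neg b) b))) (B.neg (B.mul e b)) := by rw [F2]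
      _ = B.add (B.add (B.add e e) (B.add (B.neg b) b)) (B.neg (B.mul e b)) := by
          simp only [B.add_assoc]
      _ = B.add (B.add e (B.add (B.neg b) b)) (B.neg (B.mul e b)) := by rw [he]
      _ = B.add e (B.add (B.add (B.neg b) b) (B.neg (B.mul e b))) := by rw [B.add_assoc]
      _ = B.add e (B.neg (B.mul e b)) := by rw [F1]
      _ = B.neg (B.mul e b) := E1 B he b
  have hY := B.neg_unique _ _ c1 c2
  have h2 := congrArg B.neg hY
  rw [nn, nn] at h2
  exact h2.symm


/-- e_a ∘ (-a) = -a -/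
theorem crux (a : S) : B.mul (B.add (B.neg a) a) (B.neg a) = B.neg a := by
  have he_a := aIdem_e B a
  have ea_a : B.mul (B.add (B.neg a) a) a = a := eb_mul B a
  have heaa : B.add (B.add (B.neg a) a) a = a := by
    have h := T3 B he_a a
    rw [ea_a] at h
    exact h
  have h2 : B.add (B.add (B.neg a) a) (B.mul (B.add (B.neg a) a) (B.neg a))
      = B.mul (B.add (B.neg a) a) (B.neg a) := T3 B he_a (B.neg a)
  have hr : B.mul (B.add (B.neg a) a) (B.neg a) = B.add (B.neg a) (B.add (B.neg a) a) := by
    have h := L2 B (B.add (B.neg a) a) a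
    rw [ea_a, negIdem B he_a] at h
    exact (h.trans h2).symm
  have c1 : B.add (B.add a (B.mul (B.add (B.neg a) a) (B.neg a))) a = a := by
    rw [hr]
    calc B.add (B.add a (B.add (B.neg a) (B.add (B.neg a) a))) a
        = B.add (B.add a (B.neg a)) (B.add (B.add (B.neg a) a) a) := by
          simp only [B.add_assoc]
      _ = B.add (B.add a (B.neg a)) a := by rw [heaa]
      _ = a := B.add_reg a
  have c2 : B.add (B.add (B.mul (B.add (B.neg a) a) (B.neg a)) a)
      (B.mul (B.add (B.neg a) a) (B.neg a)) = B.mul (B.add (B.neg a) a) (B.neg a) := by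
    have hra : B.add (B.mul (B.add (B.neg a) a) (B.neg a)) a = B.add (B.neg a) a := by
      rw [hr, B.add_assoc, heaa]
    rw [hra]
    exact h2
  exact B.neg_unique a _ c1 c2

/-- f_a ∘ a = a -/
theorem fa_mul (a : S) : B.mul (B.add a (B.neg a)) a = a := by
  have h := crux B (B.neg a)
  rw [nn] at h
  exact h

/-- (S,+) is Clifford -/
theorem cliffAdd (a : S) : B.add a (B.neg a) = B.add (B.neg a) a := by
  have hw := B.weak (B.neg a)
  rw [nn] at hw
  have h1 : B.mul (B.add (B.neg a) a) (B.add a (B.neg a)) = B.add a (B.neg a) := by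
    calc B.mul (B.add (B.neg a) a) (B.add a (B.neg a))
        = B.mul (B.add (B.neg a) a) (B.mul (B.neg a) (B.inv (B.neg a))) := by rw [hw]
      _ = B.mul (B.mul (B.add (B.neg a) a) (B.neg a)) (B.inv (B.neg a)) := by
          rw [B.mul_assoc]
      _ = B.mul (B.neg a) (B.inv (B.neg a)) := by rw [crux B a]
      _ = B.add a (B.neg a) := hw
  have hwa := B.weak a
  have h2 : B.mul (B.add a (B.neg a)) (B.add (B.neg a) a) = B.add (B.neg a) a := by
    calc B.mul (B.add a (B.neg a)) (B.add (B.neg a) a)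
        = B.mul (B.add a (B.neg a)) (B.mul a (B.inv a)) := by rw [hwa]
      _ = B.mul (B.mul (B.add a (B.neg a)) a) (B.inv a) := by rw [B.mul_assoc]
      _ = B.mul a (B.inv a) := by rw [fa_mul B a]
      _ = B.add (B.neg a) a := hwa
  have h3 : B.mul (B.add (B.neg a) a) (B.add a (B.neg a))
      = B.mul (B.add a (B.neg a)) (B.add (B.neg a) a) :=
    cent B (aIdem_e B a) (B.add a (B.neg a))
  calc B.add a (B.neg a) = B.mul (B.add (B.neg a) a) (B.add a (B.neg a)) := h1.symm
    _ = B.mul (B.add a (B.neg a)) (B.add (B.neg a) a) := h3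
    _ = B.add (B.neg a) a := h2

/-- additive idempotents are +-central -/
theorem addCent {e : S} (he : B.add e e = e) (x : S) : B.add e x = B.add x e :=
  (A B).central (fun a => cliffAdd B a) he x

/-- e∘(-b) = -(e∘b) for +idempotent e -/
theorem mulNeg {e : S} (he : B.add e e = e) (b : S) :
    B.mul e (B.neg b) = B.neg (B.mul e b) := by
  have hte : B.add (B.mul e b) e = B.mul e b := K10 B he b
  have hse : B.add (B.mul e (B.neg b)) e = B.mul e (B.neg b) := K10 B he (B.neg b)
  have het_t : B.add (B.add (B.neg (B.mul e b)) (B.mul e b)) (B.mul e b) = B.mul e b := by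
    have h := T3 B (aIdem_e B (B.mul e b)) (B.mul e b)
    rw [eb_mul] at h
    exact h
  have hXnb : B.mul (B.add (B.neg b) b) (B.neg b) = B.neg b := by
    have h := eb_mul B (B.neg b)
    rw [nn, cliffAdd B b] at h
    exact h
  have hets : B.mul (B.add (B.neg (B.mul e b)) (B.mul e b)) (B.mul e (B.neg b))
      = B.mul e (B.neg b) := by
    rw [← K2 B he b]
    calc B.mul (B.mul e (B.add (B.neg b) b)) (B.mul e (B.neg b))
        = B.mul e (B.mul (B.mul (B.add (B.neg b) b) e) (B.neg b)) := by
          simp only [B.mul_assoc]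
      _ = B.mul e (B.mul (B.mul e (B.add (B.neg b) b)) (B.neg b)) := by
          rw [cent B (aIdem_e B b) e]
      _ = B.mul (B.mul e e) (B.mul (B.add (B.neg b) b) (B.neg b)) := by
          simp only [B.mul_assoc]
      _ = B.mul e (B.neg b) := by rw [mulIdem B he, hXnb]
  have het_s : B.add (B.add (B.neg (B.mul e b)) (B.mul e b)) (B.mul e (B.neg b))
      = B.mul e (B.neg b) := by
    have h := T3 B (aIdem_e B (B.mul e b)) (B.mul e (B.neg b))
    rw [hets] at h
    exact h
  have hts : B.add (B.mul e b) (B.mul e (B.neg b))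
      = B.add (B.neg (B.mul e b)) (B.mul e b) := by
    have h := B.dist e b (B.neg b)
    rw [negIdem B he, hte, cliffAdd B b, K2 B he b] at h
    exact h.symm
  have hst : B.add (B.mul e (B.neg b)) (B.mul e b)
      = B.add (B.neg (B.mul e b)) (B.mul e b) := by
    have h := B.dist e (B.neg b) b
    rw [negIdem B he, hse, K2 B he b] at h
    exact h.symm
  have c1 : B.add (B.add (B.mul e b) (B.mul e (B.neg b))) (B.mul e b) = B.mul e b := by
    rw [hts]; exact het_t
  have c2 : B.add (B.add (B.mul e (B.neg b)) (B.mul e b)) (B.mul e (B.neg b))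
      = B.mul e (B.neg b) := by
    rw [hst]; exact het_s
  exact B.neg_unique _ _ c1 c2


/-- core of E-full, for d ≤ e_b -/
theorem Ecore {d : S} (hdd : B.add d d = d) (b : S)
    (hde : B.add d (B.add (B.neg b) b) = d) : B.add d b = B.mul d b := by
  have heb := aIdem_e B b
  have k3 : B.add (B.neg b) (B.mul d b) = B.add (B.neg (B.mul d b)) b := by
    have h := L2 B b d
    rw [negIdem B hdd, ← cent B hdd b] at h
    exact h.symm
  have h_ett : B.add (B.neg (B.mul d b)) (B.mul d b) = d := by
    have h := K2 B hdd b
    rw [Eidem B hdd heb, hde] at h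
    exact h.symm
  have k2 : B.add (B.mul d b) (B.neg (B.mul d b)) = d :=
    (cliffAdd B (B.mul d b)).trans h_ett
  have hebt : B.add (B.add (B.neg b) b) (B.mul d b) = B.mul d b := by
    have hm : B.mul (B.add (B.neg b) b) (B.mul d b) = B.mul d b := by
      rw [← B.mul_assoc, cent B heb d, B.mul_assoc, eb_mul]
    have h := T3 B heb (B.mul d b)
    rw [hm] at h
    exact h
  have k5 : B.add (B.add (B.neg (B.mul d b)) b) (B.add (B.neg (B.mul d b)) b) = d := by
    nth_rewrite 2 [← k3]
    calc B.add (B.add (B.neg (B.mul d b)) b) (B.add (B.neg b) (B.mul d b))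
        = B.add (B.neg (B.mul d b)) (B.add (B.add b (B.neg b)) (B.mul d b)) := by
          simp only [B.add_assoc]
      _ = B.add (B.neg (B.mul d b)) (B.add (B.add (B.neg b) b) (B.mul d b)) := by
          rw [cliffAdd B b]
      _ = B.add (B.neg (B.mul d b)) (B.mul d b) := by rw [hebt]
      _ = d := h_ett
  have hnk : B.neg (B.add (B.neg (B.mul d b)) b) = B.add (B.neg (B.mul d b)) b := by
    rw [negadd, nn]
    exact k3
  have k7 : B.mul d (B.add (B.neg (B.mul d b)) b) = B.add (B.neg (B.mul d b)) b := by
    have hw := B.weak (B.add (B.neg (B.mul d b)) b)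
    rw [hnk, k5] at hw
    have hreg := B.mul_reg (B.add (B.neg (B.mul d b)) b)
    rw [hw] at hreg
    exact hreg
  have k8 : B.mul d (B.add (B.neg (B.mul d b)) b) = d := by
    rw [B.dist, mulNeg B hdd, negIdem B hdd, ← B.mul_assoc, mulIdem B hdd]
    rw [← addCent B hdd (B.neg (B.mul d b)), E1 B hdd b]
    exact h_ett
  have k9 : B.add (B.neg (B.mul d b)) b = d := k7.symm.trans k8
  calc B.add d b = B.add (B.add (B.mul d b) (B.neg (B.mul d b))) b := by rw [k2]
    _ = B.add (B.mul d b) (B.add (B.neg (B.mul d b)) b) := B.add_assoc _ _ _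
    _ = B.add (B.mul d b) d := by rw [k9]
    _ = B.mul d b := K10 B hdd b

/-- E-full : e + b = e∘b for +idempotent e -/
theorem Efull {e : S} (he : B.add e e = e) (b : S) : B.add e b = B.mul e b := by
  have heb := aIdem_e B b
  have hdd := addSq B he heb
  have hde : B.add (B.add e (B.add (B.neg b) b)) (B.add (B.neg b) b)
      = B.add e (B.add (B.neg b) b) := by
    rw [B.add_assoc, heb]
  have hebb : B.add (B.add (B.neg b) b) b = b := by
    have h := T3 B heb b
    rw [eb_mul] at h
    exact h
  calc B.add e b = B.add (B.add e (B.add (B.neg b) b)) b := by rw [B.add_assoc, hebb]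
    _ = B.mul (B.add e (B.add (B.neg b) b)) b := Ecore B hdd b hde
    _ = B.mul e b := by rw [← Eidem B he heb, B.mul_assoc, eb_mul]


/-- λ is a homomorphism: λ_a (λ_b c) = λ_{a∘b} c -/
theorem lamHom (a b c : S) :
    B.add (B.neg a) (B.mul a (B.add (B.neg b) (B.mul b c)))
      = B.add (B.neg (B.mul a b)) (B.mul (B.mul a b) c) := by
  have habs : B.add (B.add a (B.neg a)) (B.mul (B.mul a b) c) = B.mul (B.mul a b) c := by
    rw [cliffAdd B a]
    have hm : B.mul (B.add (B.neg a) a) (B.mul (B.mul a b) c) = B.mul (B.mul a b) c := by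
      simp only [← B.mul_assoc]
      rw [eb_mul]
    have h := T3 B (aIdem_e B a) (B.mul (B.mul a b) c)
    rw [hm] at h
    exact h
  calc B.add (B.neg a) (B.mul a (B.add (B.neg b) (B.mul b c)))
      = B.add (B.neg a) (B.add (B.add (B.mul a (B.neg b)) (B.neg a))
          (B.mul a (B.mul b c))) := by rw [B.dist]
    _ = B.add (B.add (B.neg a) (B.mul a (B.neg b)))
          (B.add (B.neg a) (B.mul (B.mul a b) c)) := by
        rw [← B.mul_assoc a b c]; simp only [B.add_assoc]
    _ = B.add (B.add (B.neg (B.mul a b)) a)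
          (B.add (B.neg a) (B.mul (B.mul a b) c)) := by rw [← L2]
    _ = B.add (B.neg (B.mul a b)) (B.add (B.add a (B.neg a)) (B.mul (B.mul a b) c)) := by
        simp only [B.add_assoc]
    _ = B.add (B.neg (B.mul a b)) (B.mul (B.mul a b) c) := by rw [habs]

/-- (z∘z⁻)∘(y∘z) = y∘z -/
theorem epsAbs (z y : S) :
    B.mul (B.mul z (B.inv z)) (B.mul y z) = B.mul y z := by
  calc B.mul (B.mul z (B.inv z)) (B.mul y z)
      = B.mul (B.mul (B.mul z (B.inv z)) y) z := (B.mul_assoc _ _ _).symm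
    _ = B.mul (B.mul y (B.mul z (B.inv z))) z := by
        rw [B.weak z, cent B (aIdem_e B z) y, ← B.weak z]
    _ = B.mul y (B.mul (B.mul z (B.inv z)) z) := by simp only [B.mul_assoc]
    _ = B.mul y z := by rw [B.mul_reg]

/-- (a∘y)∘z = (a∘z)∘(z⁻∘(y∘z)) -/
theorem sig_lam (z a y : S) :
    B.mul (B.mul a y) z
      = B.mul (B.mul a z) (B.mul (B.inv z) (B.mul y z)) := by
  calc B.mul (B.mul a y) z = B.mul a (B.mul y z) := B.mul_assoc _ _ _
    _ = B.mul a (B.mul (B.mul z (B.inv z)) (B.mul y z)) := by rw [epsAbs]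
    _ = B.mul (B.mul a z) (B.mul (B.inv z) (B.mul y z)) := by simp only [B.mul_assoc]


theorem dir_mpr (z : S) (h : ∀ a, B.mul a z = B.add z a) :
    ∀ a b c, B.sigma z a (B.sigma z b c) = B.sigma z (B.mul a b) c := by
  have hphi : ∀ y, B.mul (B.inv z) (B.mul y z)
      = B.add (B.neg (B.inv z)) (B.mul (B.inv z) y) := by
    intro y
    have hzz : B.mul (B.inv z) z = B.add (B.neg (B.inv z)) (B.inv z) := by
      have hw := B.weak (B.inv z); rw [ii] at hw; exact hw
    calc B.mul (B.inv z) (B.mul y z) = B.mul (B.inv z) (B.add z y) := by rw [h y]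
      _ = B.add (B.add (B.mul (B.inv z) z) (B.neg (B.inv z))) (B.mul (B.inv z) y) :=
          B.dist _ _ _
      _ = B.add (B.neg (B.inv z)) (B.mul (B.inv z) y) := by rw [hzz, B.neg_reg]
  have hsig : ∀ a y, B.sigma z a y = B.add (B.neg (B.mul a z))
      (B.mul (B.mul a z) (B.add (B.neg (B.inv z)) (B.mul (B.inv z) y))) := by
    intro a y
    show B.add (B.neg (B.mul a z)) (B.mul (B.mul a y) z) = _
    rw [sig_lam B z a y, hphi y]
  intro a b c
  rw [hsig a (B.sigma z b c), hsig b c, hsig (B.mul a b) c]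
  rw [lamHom B (B.inv z) (B.mul b z)]
  rw [lamHom B (B.mul a z) (B.mul (B.inv z) (B.mul b z))]
  rw [← sig_lam B z a b]

theorem dir_mp (z : S) (H : ∀ a b c, B.sigma z a (B.sigma z b c) = B.sigma z (B.mul a b) c) :
    ∀ a, B.mul a z = B.add z a := by
  have q1 : ∀ x, B.sigma z (B.inv z) (B.mul z x) = B.mul x z := by
    intro x
    have hma : B.mul (B.add (B.neg z) z) (B.mul x z) = B.mul x z := by
      have hh := epsAbs B z x; rw [B.weak z] at hh; exact hh
    have habs : B.add (B.add (B.neg z) z) (B.mul x z) = B.mul x z := by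
      have hh := T3 B (aIdem_e B z) (B.mul x z); rw [hma] at hh; exact hh
    show B.add (B.neg (B.mul (B.inv z) z)) (B.mul (B.mul (B.inv z) (B.mul z x)) z)
        = B.mul x z
    rw [← B.mul_assoc (B.inv z) z x, ← B.clifford z]
    rw [B.mul_assoc (B.mul z (B.inv z)) x z, epsAbs B z x]
    rw [B.weak z, negIdem B (aIdem_e B z)]
    exact habs
  have hinner : ∀ x, B.mul (B.inv z) (B.mul z (B.mul x z)) = B.mul x z := by
    intro x; rw [← B.mul_assoc, ← B.clifford z]; exact epsAbs B z x
  have phi : ∀ a x, B.sigma z a (B.mul x z)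
      = B.add (B.neg (B.mul a (B.mul z (B.inv z)))) (B.mul a (B.mul x z)) := by
    intro a x
    have h := H a (B.inv z) (B.mul z x)
    rw [q1 x] at h
    rw [h]
    show B.add (B.neg (B.mul (B.mul a (B.inv z)) z))
        (B.mul (B.mul (B.mul a (B.inv z)) (B.mul z x)) z) = _
    rw [B.mul_assoc a (B.inv z) z]
    rw [← B.clifford z]
    simp only [B.mul_assoc]
    rw [hinner x]
  have phi6 : ∀ x, B.mul (B.mul x z) z = B.add z (B.mul x z) := by
    intro x
    have h5 := phi (B.mul z (B.inv z)) x
    have expand : B.sigma z (B.mul z (B.inv z)) (B.mul x z)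
        = B.add (B.neg z) (B.mul (B.mul x z) z) := by
      show B.add (B.neg (B.mul (B.mul z (B.inv z)) z))
          (B.mul (B.mul (B.mul z (B.inv z)) (B.mul x z)) z) = _
      rw [B.mul_reg z, epsAbs B z x]
    rw [expand] at h5
    have e2 : B.mul (B.mul z (B.inv z)) (B.mul z (B.inv z)) = B.mul z (B.inv z) :=
      (M B).idem_f z
    rw [e2, epsAbs B z x] at h5
    rw [B.weak z, negIdem B (aIdem_e B z)] at h5
    have h6 := congrArg (B.add z) h5
    rw [← B.add_assoc, ← B.add_assoc] at h6
    rw [a_eR B z] at h6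
    rw [cliffAdd B z] at h6
    have habs2 : B.add (B.add (B.neg z) z) (B.mul (B.mul x z) z)
        = B.mul (B.mul x z) z := by
      have hm : B.mul (B.add (B.neg z) z) (B.mul (B.mul x z) z)
          = B.mul (B.mul x z) z := by
        have hh := epsAbs B z (B.mul x z); rw [B.weak z] at hh; exact hh
      have hh := T3 B (aIdem_e B z) (B.mul (B.mul x z) z); rw [hm] at hh; exact hh
    rw [habs2] at h6
    exact h6
  intro a
  have h8 : B.add (B.neg (B.mul a z)) (B.add z (B.mul a (B.mul z (B.inv z))))
      = B.add (B.neg (B.mul a (B.mul z (B.inv z)))) (B.mul a (B.mul z (B.inv z))) := by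
    have h := phi a (B.inv z)
    have hexp : B.sigma z a (B.mul (B.inv z) z)
        = B.add (B.neg (B.mul a z)) (B.add z (B.mul a (B.mul (B.inv z) z))) := by
      show B.add (B.neg (B.mul a z)) (B.mul (B.mul a (B.mul (B.inv z) z)) z) = _
      rw [← B.mul_assoc a (B.inv z) z]
      rw [phi6 (B.mul a (B.inv z))]
    rw [hexp] at h
    rw [← B.clifford z] at h
    exact h
  have hae : B.mul a (B.add (B.neg z) z) = B.add (B.add (B.neg z) z) a := by
    rw [← cent B (aIdem_e B z) a, ← Efull B (aIdem_e B z) a]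
  have hEE : B.add (B.neg (B.mul a (B.add (B.neg z) z))) (B.mul a (B.add (B.neg z) z))
      = B.add (B.neg (B.mul a z)) (B.mul a z) := by
    rw [e_mul B a (B.add (B.neg z) z), e_mul B a z]
    rw [negIdem B (aIdem_e B z), aIdem_e B z]
  rw [B.weak z] at h8
  rw [hEE] at h8
  rw [hae] at h8
  rw [← B.add_assoc z (B.add (B.neg z) z) a, a_eR B z] at h8
  have h9 := congrArg (B.add (B.mul a z)) h8
  rw [a_eR B (B.mul a z)] at h9
  rw [← B.add_assoc, cliffAdd B (B.mul a z)] at h9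
  have hEza : B.add (B.neg (B.mul a z)) (B.mul a z)
      = B.add (B.neg (B.add z a)) (B.add z a) := by
    have l1 : B.add (B.neg (B.mul a z)) (B.mul a z)
        = B.add (B.add (B.neg a) a) (B.add (B.neg z) z) := by
      rw [e_mul B a z, B.mul_assoc, cent B (aIdem_e B z) (B.inv a), ← B.mul_assoc,
        B.weak a, Eidem B (aIdem_e B a) (aIdem_e B z)]
    have l2 : B.add (B.neg (B.add z a)) (B.add z a)
        = B.add (B.add (B.neg a) a) (B.add (B.neg z) z) := by
      rw [negadd]
      calc B.add (B.add (B.neg a) (B.neg z)) (B.add z a)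
          = B.add (B.neg a) (B.add (B.add (B.neg z) z) a) := by simp only [B.add_assoc]
        _ = B.add (B.neg a) (B.add a (B.add (B.neg z) z)) := by
            rw [addCent B (aIdem_e B z) a]
        _ = B.add (B.add (B.neg a) a) (B.add (B.neg z) z) := by simp only [B.add_assoc]
    exact l1.trans l2.symm
  rw [hEza] at h9
  have habs3 : B.add (B.add (B.neg (B.add z a)) (B.add z a)) (B.add z a)
      = B.add z a := by
    have hh := T3 B (aIdem_e B (B.add z a)) (B.add z a)
    rw [eb_mul B (B.add z a)] at hh
    exact hh
  rw [habs3] at h9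
  exact h9.symm

end DualWeakBrace

/-- The map `σ^z : (S,∘) → Map(S)` is a homomorphism, i.e.
`σ^z_a ∘ σ^z_b = σ^z_{a∘b}`, if and only if `a ∘ z = z + a` for every `a ∈ S`. -/
theorem statement8 {S : Type*} (B : DualWeakBrace S) (z : S) :
    (∀ a b c : S, B.sigma z a (B.sigma z b c) = B.sigma z (B.mul a b) c) ↔
      (∀ a : S, B.mul a z = B.add z a) := by
  constructor
  · intro H
    exact B.dir_mp z H
  · intro h a b c
    exact B.dir_mpr z h a b c
end

section
/- Let (B, +, ∘) be a two-sided skew brace and z, w ∈ B elements in the same conjugacy class of the group (B, ∘). Then the deformed solutions r_z and r_w, where r_z(a,b) = (-a∘z + a∘b∘z, (-a∘z + a∘b∘z)⁻ ∘ a∘b), are equivalent; i.e., there is a bijection φ : B → B with (φ × φ) ∘ r_z = r_w ∘ (φ × φ). -/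
/-- A skew (left) brace: two group structures with common identity `zero`, with
`a ∘ (b + c) = a ∘ b - a + a ∘ c`. -/
structure SkewBrace (B : Type*) where
  add : B → B → B
  zero : B
  neg : B → B
  mul : B → B → B
  inv : B → B
  add_assoc : ∀ a b c, add (add a b) c = add a (add b c)
  zero_add : ∀ a, add zero a = a
  add_zero : ∀ a, add a zero = a
  neg_add : ∀ a, add (neg a) a = zero
  add_neg : ∀ a, add a (neg a) = zero
  mul_assoc : ∀ a b c, mul (mul a b) c = mul a (mul b c)
  zero_mul : ∀ a, mul zero a = a
  mul_zero : ∀ a, mul a zero = a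
  inv_mul : ∀ a, mul (inv a) a = zero
  mul_inv : ∀ a, mul a (inv a) = zero
  dist : ∀ a b c, mul a (add b c) = add (add (mul a b) (neg a)) (mul a c)

/-- The right distributor `D_r(B)`. -/
def SkewBrace.Dr {B : Type*} (Br : SkewBrace B) : Set B :=
  {z | ∀ a b, Br.mul (Br.add a b) z = Br.add (Br.add (Br.mul a z) (Br.neg z)) (Br.mul b z)}

/-- `σ_a^z(b) = -a∘z + a∘b∘z`. -/
def SkewBrace.sigma {B : Type*} (Br : SkewBrace B) (z a b : B) : B :=
  Br.add (Br.neg (Br.mul a z)) (Br.mul (Br.mul a b) z)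

/-- `τ_b^z(a) = (σ_a^z(b))⁻ ∘ a ∘ b`. -/
def SkewBrace.tau {B : Type*} (Br : SkewBrace B) (z b a : B) : B :=
  Br.mul (Br.mul (Br.inv (Br.sigma z a b)) a) b

/-- The deformed map `r_z`. -/
def SkewBrace.rz {B : Type*} (Br : SkewBrace B) (z : B) : B × B → B × B :=
  fun p => (Br.sigma z p.1 p.2, Br.tau z p.2 p.1)

/-- The map `ř_w(a,b) = (a∘b - a∘w + w, (a∘b - a∘w + w)⁻ ∘ a ∘ b)`. -/
def SkewBrace.rcheck {B : Type*} (Br : SkewBrace B) (w : B) : B × B → B × B :=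
  fun p =>
    (Br.add (Br.add (Br.mul p.1 p.2) (Br.neg (Br.mul p.1 w))) w,
     Br.mul (Br.mul (Br.inv (Br.add (Br.add (Br.mul p.1 p.2) (Br.neg (Br.mul p.1 w))) w)) p.1) p.2)

/-- In a two-sided skew brace, if `z` and `w` are conjugate in `(B,∘)`, then the deformed
solutions `r_z` and `r_w` are equivalent via a bijection `φ`. -/
theorem statement9 {B : Type*} (Br : SkewBrace B)
    (htwo : ∀ a b c : B, Br.mul (Br.add a b) c =
      Br.add (Br.add (Br.mul a c) (Br.neg c)) (Br.mul b c))
    (z w : B) (c : B) (hconj : w = Br.mul (Br.mul (Br.inv c) z) c) :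
    ∃ φ : B → B, Function.Bijective φ ∧
      ∀ p : B × B, Prod.map φ φ (Br.rz z p) = Br.rz w (φ p.1, φ p.2) := by

  letI : Add B := ⟨Br.add⟩
  letI : Zero B := ⟨Br.zero⟩
  letI : Neg B := ⟨Br.neg⟩
  letI : Mul B := ⟨Br.mul⟩
  letI : One B := ⟨Br.zero⟩
  letI : Inv B := ⟨Br.inv⟩
  letI : AddGroup B := AddGroup.ofLeftAxioms Br.add_assoc Br.zero_add Br.neg_add
  letI : Group B := Group.ofLeftAxioms Br.mul_assoc Br.zero_mul Br.inv_mul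
  have ha : ∀ a b : B, Br.add a b = a + b := fun _ _ => rfl
  have hm : ∀ a b : B, Br.mul a b = a * b := fun _ _ => rfl
  have hn : ∀ a : B, Br.neg a = -a := fun _ => rfl
  have hi : ∀ a : B, Br.inv a = a⁻¹ := fun _ => rfl
  have h01 : (0 : B) = 1 := rfl
  have dist : ∀ a b c : B, a * (b + c) = a * b + -a + a * c := Br.dist
  have htwo' : ∀ a b c : B, (a + b) * c = a * c + -c + b * c := htwo
  set φ : B → B := fun a => c⁻¹ * a * c with hφ
  have hmul : ∀ x y : B, φ (x * y) = φ x * φ y := by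
    intro x y; simp only [hφ]; group
  have hK : c⁻¹ * (-c) = c⁻¹ + c⁻¹ := by
    have h := dist c⁻¹ c (-c)
    rw [add_neg_cancel, h01, mul_one, inv_mul_cancel, ← h01, zero_add] at h
    have h2 := congrArg (fun t => c⁻¹ + t) h
    simpa using h2.symm
  have hadd : ∀ x y : B, φ (x + y) = φ x + φ y := by
    intro x y
    have h1 : φ (x + y) = c⁻¹ * ((x * c + -c) + y * c) := by
      simp only [hφ, mul_assoc, htwo' x y c]
    rw [h1, dist, dist, hK]
    simp [hφ, mul_assoc, add_assoc, add_neg_cancel_left, neg_add_cancel_left]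
  have h0 : φ 0 = 0 := by simp [hφ, h01]
  have hneg : ∀ x : B, φ (-x) = -φ x := by
    intro x
    have h := hadd (-x) x
    rw [neg_add_cancel, h0] at h
    exact eq_neg_of_add_eq_zero_left h.symm
  have hinvp : ∀ x : B, φ x⁻¹ = (φ x)⁻¹ := by
    intro x; simp only [hφ]; group
  have hw : φ z = w := by rw [hconj, hm, hm, hi]
  have hbij : Function.Bijective φ := by
    refine Function.bijective_iff_has_inverse.mpr ⟨fun a => c * a * c⁻¹, fun x => ?_, fun x => ?_⟩ <;>
      · simp only [hφ]; group
  refine ⟨φ, hbij, ?_⟩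
  rintro ⟨a, b⟩
  have hs : φ (Br.sigma z a b) = Br.sigma w (φ a) (φ b) := by
    simp only [SkewBrace.sigma, ha, hm, hn]
    rw [hadd, hneg, hmul, hmul, hmul, hw]
  have ht : φ (Br.tau z b a) = Br.tau w (φ b) (φ a) := by
    simp only [SkewBrace.tau, hm, hi]
    rw [hmul, hmul, hinvp, hs]
  simp only [SkewBrace.rz, Prod.map, hs, ht]
end

section
/- For any dual weak brace (S, +, ∘), the right distributor D_r(S) is a full inverse subsemigroup of the Clifford semigroup (S, ∘): it contains all idempotents E(S), is closed under ∘, and is closed under taking ∘-inverses. Moreover, D_r(S) contains the center of (S,∘). -/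
/-!
Idempotents of the Clifford semigroup `(S,∘)` are central, and a central `z` lies in `D_r(S)`
because `(a + b) ∘ z = z ∘ (a + b)` distributes by the brace axiom.

The additive side rests on one absorption fact: if `ε` is a `∘`-idempotent with `ε ∘ x = x`,
then `x + ε = x = ε + x`. The right-hand version follows from `ε ∘ (-x + x) = -x + x`, as
`-x + x = x ∘ x⁻` is idempotent; the left-hand one needs `(-a + a) ∘ (-a) = -a`, proved by
showing that the left side is an additive inverse of `a`.

For `z ∈ D_r(S)` the map `x ↦ x ∘ z - z` is an additive endomorphism, so it commutes with `-`.
Expanding `(a + b) ∘ z ∘ w` with this leaves a factor `-w + w - z ∘ w`, which absorption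
reduces to `-(z ∘ w)`. For `z⁻`, both `(a + b) ∘ z⁻` and `a ∘ z⁻ - z⁻ + b ∘ z⁻` are fixed by
`ε = z⁻ ∘ z` and are sent to `(a + b) ∘ ε` by `∘ z`.
-/

structure IsInverseSemigroup {S : Type*} (op : S → S → S) (iv : S → S) : Prop where
  assoc : ∀ a b c, op (op a b) c = op a (op b c)
  op_iv_op : ∀ a, op (op a (iv a)) a = a
  iv_op_iv : ∀ a, op (op (iv a) a) (iv a) = iv a
  eq_iv : ∀ a b, op (op a b) a = a → op (op b a) b = b → b = iv a

namespace IsInverseSemigroup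

variable {S : Type*} {op : S → S → S} {iv : S → S} (h : IsInverseSemigroup op iv)
include h

theorem iv_iv (a : S) : iv (iv a) = a :=
  (h.eq_iv (iv a) a (h.iv_op_iv a) (h.op_iv_op a)).symm

theorem iv_eq_self_of_idem {e : S} (he : op e e = e) : iv e = e :=
  (h.eq_iv e e (by rw [he, he]) (by rw [he, he])).symm

theorem op_iv_idem (a : S) : op (op a (iv a)) (op a (iv a)) = op a (iv a) := by
  rw [← h.assoc, h.op_iv_op]

theorem iv_op_idem (a : S) : op (op (iv a) a) (op (iv a) a) = op (iv a) a := by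
  rw [← h.assoc, h.iv_op_iv]

theorem op_idem_of_idem {e f : S} (he : op e e = e) (hf : op f f = f) :
    op (op e f) (op e f) = op e f := by
  set x := iv (op e f)
  have hx : ∀ t, op x (op e (op f (op x t))) = op x t := fun t => by
    simpa only [h.assoc] using congrArg (op · t) (h.iv_op_iv (op e f))
  -- `f x e` is another inverse of `e f`
  have hfxe : op f (op x e) = x := by
    refine h.eq_iv _ _ ?_ ?_
    · have := h.op_iv_op (op e f)
      simp only [h.assoc] at this ⊢
      rwa [← h.assoc f f, hf, ← h.assoc e e, he]
    · simp only [h.assoc]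
      rw [← h.assoc e e, he, ← h.assoc f f, hf, hx]
  have hxx : op x x = x := by
    conv_lhs => rw [← hfxe]
    simp only [h.assoc]
    rw [hx, hfxe]
  rw [← h.iv_iv (op e f), h.iv_eq_self_of_idem hxx, hxx]

theorem idem_comm {e f : S} (he : op e e = e) (hf : op f f = f) : op e f = op f e := by
  have hef := h.op_idem_of_idem he hf
  have hfe := h.op_idem_of_idem hf he
  rw [h.eq_iv (op e f) (op f e), h.iv_eq_self_of_idem hef]
  · simp only [h.assoc] at hef ⊢
    rwa [← h.assoc f f, hf, ← h.assoc e e, he]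
  · simp only [h.assoc] at hfe ⊢
    rwa [← h.assoc e e, he, ← h.assoc f f, hf]

theorem iv_op (a b : S) : iv (op a b) = op (iv b) (iv a) := by
  have hcomm := h.idem_comm (h.op_iv_idem b) (h.iv_op_idem a)
  refine (h.eq_iv _ _ ?_ ?_).symm
  · calc op (op (op a b) (op (iv b) (iv a))) (op a b)
        = op a (op (op (op b (iv b)) (op (iv a) a)) b) := by simp only [h.assoc]
      _ = op (op (op a (iv a)) a) (op (op b (iv b)) b) := by rw [hcomm]; simp only [h.assoc]
      _ = op a b := by rw [h.op_iv_op, h.op_iv_op]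
  · calc op (op (op (iv b) (iv a)) (op a b)) (op (iv b) (iv a))
        = op (iv b) (op (op (op (iv a) a) (op b (iv b))) (iv a)) := by simp only [h.assoc]
      _ = op (op (op (iv b) b) (iv b)) (op (op (iv a) a) (iv a)) := by
          rw [← hcomm]; simp only [h.assoc]
      _ = op (iv b) (iv a) := by rw [h.iv_op_iv, h.iv_op_iv]

theorem map_iv {f : S → S} (hf : ∀ x y, f (op x y) = op (f x) (f y)) (a : S) :
    f (iv a) = iv (f a) :=
  h.eq_iv _ _ (by rw [← hf, ← hf, h.op_iv_op]) (by rw [← hf, ← hf, h.iv_op_iv])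

theorem idem_comm_of_clifford (hc : ∀ a, op a (iv a) = op (iv a) a) {e : S}
    (he : op e e = e) (a : S) : op e a = op a e := by
  have hcomm := h.idem_comm he (h.iv_op_idem a)
  -- Clifford for `a e`, whose inverse is `e a⁻`
  have hconj : op (op a e) (iv a) = op e (op (iv a) a) := by
    have hcl := hc (op a e)
    rw [h.iv_op, h.iv_eq_self_of_idem he] at hcl
    calc op (op a e) (iv a) = op (op a e) (op e (iv a)) := by
          simp only [h.assoc]; rw [← h.assoc e e, he]
      _ = op (op e (iv a)) (op a e) := hcl
      _ = op e (op e (op (iv a) a)) := by rw [hcomm]; simp only [h.assoc]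
      _ = op e (op (iv a) a) := by rw [← h.assoc, he]
  calc op e a = op e (op (op a (iv a)) a) := by rw [h.op_iv_op]
    _ = op (op e (op (iv a) a)) a := by rw [← hc a]; simp only [h.assoc]
    _ = op (op (op a e) (iv a)) a := by rw [hconj]
    _ = op a (op e (op (iv a) a)) := by simp only [h.assoc]
    _ = op a e := by rw [hcomm, ← h.assoc, ← h.assoc a, h.op_iv_op]

end IsInverseSemigroup

namespace DualWeakBrace

variable {S : Type*} (B : DualWeakBrace S)

local infixl:65 " ∔ " => B.add
local infixl:70 " ⊚ " => B.mul
local prefix:max "⊟" => B.neg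
local postfix:max "⁻" => B.inv

theorem isInverseSemigroup_add : IsInverseSemigroup B.add B.neg :=
  ⟨B.add_assoc, B.add_reg, B.neg_reg, B.neg_unique⟩

theorem isInverseSemigroup_mul : IsInverseSemigroup B.mul B.inv :=
  ⟨B.mul_assoc, B.mul_reg, B.inv_reg, B.inv_unique⟩

theorem neg_neg (a : S) : ⊟⊟a = a := B.isInverseSemigroup_add.iv_iv a

theorem neg_add (a b : S) : ⊟(a ∔ b) = ⊟b ∔ ⊟a := B.isInverseSemigroup_add.iv_op a b

theorem mul_comm_of_idem {e : S} (he : e ⊚ e = e) (a : S) : e ⊚ a = a ⊚ e :=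
  B.isInverseSemigroup_mul.idem_comm_of_clifford B.clifford he a

theorem inv_mul_eq_neg_add (a : S) : a⁻ ⊚ a = ⊟a ∔ a := by
  rw [← B.clifford, B.weak]

theorem neg_add_self_mul_self (a : S) : (⊟a ∔ a) ⊚ (⊟a ∔ a) = ⊟a ∔ a := by
  rw [← B.weak]; exact B.isInverseSemigroup_mul.op_iv_idem a

theorem neg_add_self_mul (a : S) : (⊟a ∔ a) ⊚ a = a := by
  rw [← B.weak, B.mul_reg]

theorem add_idem_of_mul_idem {e : S} (he : e ⊚ e = e) : e ∔ e = e := by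
  have hw := B.weak e
  rw [B.isInverseSemigroup_mul.iv_eq_self_of_idem he, he] at hw
  rw [hw]
  exact B.isInverseSemigroup_add.iv_op_idem e

theorem neg_eq_self_of_mul_idem {e : S} (he : e ⊚ e = e) : ⊟e = e :=
  B.isInverseSemigroup_add.iv_eq_self_of_idem (B.add_idem_of_mul_idem he)

theorem add_eq_left_of_mul_eq_of_idem {ε ρ : S} (hε : ε ⊚ ε = ε) (hρ : ρ ⊚ ρ = ρ)
    (h : ε ⊚ ρ = ρ) : ρ ∔ ε = ρ := by
  have hd := B.dist ε ρ ρ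
  rw [B.add_idem_of_mul_idem hρ, h, B.neg_eq_self_of_mul_idem hε] at hd
  calc ρ ∔ ε = ρ ∔ ρ ∔ ε := by rw [B.add_idem_of_mul_idem hρ]
    _ = ρ ∔ ε ∔ ρ := by
        rw [B.add_assoc, B.add_assoc, B.isInverseSemigroup_add.idem_comm
          (B.add_idem_of_mul_idem hε) (B.add_idem_of_mul_idem hρ)]
    _ = ρ := hd.symm

theorem add_eq_left_of_mul_eq {ε x : S} (hε : ε ⊚ ε = ε) (h : ε ⊚ x = x) : x ∔ ε = x := by
  have hf : ε ⊚ (⊟x ∔ x) = ⊟x ∔ x := by rw [← B.weak, ← B.mul_assoc, h]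
  calc x ∔ ε = x ∔ (⊟x ∔ x) ∔ ε := by rw [← B.add_assoc, B.add_reg]
    _ = x := by
      rw [B.add_assoc, B.add_eq_left_of_mul_eq_of_idem hε (B.neg_add_self_mul_self x) hf,
        ← B.add_assoc, B.add_reg]

theorem mul_add_of_mul_eq {ε x y : S} (hε : ε ⊚ ε = ε) (hx : ε ⊚ x = x) (hy : ε ⊚ y = y) :
    ε ⊚ (x ∔ y) = x ∔ y := by
  rw [B.dist, hx, hy, B.neg_eq_self_of_mul_idem hε, B.add_eq_left_of_mul_eq hε hx]

theorem neg_add_self_mul_neg (a : S) : (⊟a ∔ a) ⊚ ⊟a = ⊟a := by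
  set μ := ⊟a ∔ a
  set u := μ ⊚ ⊟a
  have hμ := B.neg_add_self_mul_self a
  have hδ : (a ∔ ⊟a) ⊚ (a ∔ ⊟a) = a ∔ ⊟a := by
    simpa only [B.neg_neg] using B.neg_add_self_mul_self (⊟a)
  have huμ : u ∔ μ = u := B.add_eq_left_of_mul_eq hμ (by rw [← B.mul_assoc, hμ])
  have huδ : u ∔ (a ∔ ⊟a) = u := by
    have hδa : (a ∔ ⊟a) ⊚ ⊟a = ⊟a := by simpa only [B.neg_neg] using B.neg_add_self_mul (⊟a)
    refine B.add_eq_left_of_mul_eq hδ ?_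
    rw [← B.mul_assoc, B.mul_comm_of_idem hδ, B.mul_assoc, hδa]
  have hua : u ∔ a = μ := by
    have hd := B.dist μ (⊟a) a
    rw [hμ, B.neg_eq_self_of_mul_idem hμ, huμ, B.neg_add_self_mul] at hd
    exact hd.symm
  have hu : u = μ ∔ ⊟a := by rw [← hua, B.add_assoc, huδ]
  refine B.neg_unique a u ?_ ?_
  · rw [B.add_assoc, hua, ← B.add_assoc, B.add_reg]
  · rw [hua, hu, ← B.add_assoc, B.add_idem_of_mul_idem hμ]

theorem mul_neg_of_mul_eq {ε x : S} (h : ε ⊚ x = x) : ε ⊚ ⊟x = ⊟x :=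
  calc ε ⊚ ⊟x = ε ⊚ (x ⊚ x⁻ ⊚ ⊟x) := by rw [B.weak, B.neg_add_self_mul_neg]
    _ = x ⊚ x⁻ ⊚ ⊟x := by rw [← B.mul_assoc, ← B.mul_assoc, h]
    _ = ⊟x := by rw [B.weak, B.neg_add_self_mul_neg]

theorem add_eq_right_of_mul_eq {ε x : S} (hε : ε ⊚ ε = ε) (h : ε ⊚ x = x) : ε ∔ x = x := by
  have := congrArg B.neg (B.add_eq_left_of_mul_eq hε (B.mul_neg_of_mul_eq h))
  rwa [B.neg_add, B.neg_neg, B.neg_eq_self_of_mul_idem hε] at this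

theorem mem_Dr_of_commute {z : S} (hz : ∀ a, z ⊚ a = a ⊚ z) : z ∈ B.Dr := fun a b => by
  rw [← hz, B.dist, hz, hz]

theorem mem_Dr_of_idem {e : S} (he : e ⊚ e = e) : e ∈ B.Dr :=
  B.mem_Dr_of_commute (B.mul_comm_of_idem he)

-- `x ↦ x ⊚ z ∔ ⊟z` is a `∔`-homomorphism, hence commutes with `⊟`
theorem neg_mul_add_neg_of_mem_Dr {z : S} (hz : z ∈ B.Dr) (x : S) :
    (⊟x) ⊚ z ∔ ⊟z = z ∔ ⊟(x ⊚ z) := by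
  have := B.isInverseSemigroup_add.map_iv (f := fun y => y ⊚ z ∔ ⊟z)
    (fun x y => by simp only [hz x y, B.add_assoc]) x
  rwa [B.neg_add, B.neg_neg] at this

theorem mul_mem_Dr {z w : S} (hz : z ∈ B.Dr) (hw : w ∈ B.Dr) : z ⊚ w ∈ B.Dr := by
  intro a b
  have hμ := B.neg_add_self_mul_self w
  have habs : ⊟w ∔ w ∔ ⊟(z ⊚ w) = ⊟(z ⊚ w) := by
    refine B.add_eq_right_of_mul_eq hμ (B.mul_neg_of_mul_eq ?_)
    rw [← B.mul_assoc, B.mul_comm_of_idem hμ, B.mul_assoc, B.neg_add_self_mul]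
  calc (a ∔ b) ⊚ (z ⊚ w) = (a ⊚ z ∔ ⊟z ∔ b ⊚ z) ⊚ w := by rw [← B.mul_assoc, hz]
    _ = a ⊚ z ⊚ w ∔ (⊟w ∔ ((⊟z) ⊚ w ∔ ⊟w)) ∔ b ⊚ z ⊚ w := by
        rw [hw, hw]; simp only [B.add_assoc]
    _ = a ⊚ (z ⊚ w) ∔ ⊟(z ⊚ w) ∔ b ⊚ (z ⊚ w) := by
        rw [B.neg_mul_add_neg_of_mem_Dr hw, ← B.add_assoc (⊟w) w, habs]
        simp only [B.mul_assoc]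

theorem inv_mem_Dr {z : S} (hz : z ∈ B.Dr) : z⁻ ∈ B.Dr := by
  intro a b
  set ε := z⁻ ⊚ z with hε_def
  have hε : ε ⊚ ε = ε := B.isInverseSemigroup_mul.iv_op_idem z
  have hfix : ∀ x, ε ⊚ (x ⊚ z⁻) = x ⊚ z⁻ := fun x => by
    rw [← B.mul_assoc, B.mul_comm_of_idem hε, B.mul_assoc, B.inv_reg]
  set R := a ⊚ z⁻ ∔ ⊟z⁻ ∔ b ⊚ z⁻
  have hR : ε ⊚ R = R := B.mul_add_of_mul_eq hε
    (B.mul_add_of_mul_eq hε (hfix a) (B.mul_neg_of_mul_eq (B.inv_reg z))) (hfix b)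
  have hRz : R ⊚ z = (a ∔ b) ⊚ ε :=
    calc R ⊚ z = a ⊚ z⁻ ⊚ z ∔ (⊟z ∔ ((⊟z⁻) ⊚ z ∔ ⊟z)) ∔ b ⊚ z⁻ ⊚ z := by
          rw [hz, hz]; simp only [B.add_assoc]
      _ = a ⊚ ε ∔ ⊟ε ∔ b ⊚ ε := by
          rw [B.neg_mul_add_neg_of_mem_Dr hz, ← B.add_assoc (⊟z) z, ← B.inv_mul_eq_neg_add,
            B.neg_eq_self_of_mul_idem hε, B.add_idem_of_mul_idem hε]
          simp only [B.mul_assoc, ← hε_def]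
      _ = (a ∔ b) ⊚ ε := (B.mem_Dr_of_idem hε a b).symm
  calc (a ∔ b) ⊚ z⁻ = (a ∔ b) ⊚ ε ⊚ z⁻ := by rw [B.mul_assoc, B.inv_reg]
    _ = R ⊚ ε := by rw [← hRz, B.mul_assoc, B.clifford]
    _ = R := by rw [← B.mul_comm_of_idem hε, hR]

end DualWeakBrace

/-- `D_r(S)` is a full inverse subsemigroup of the Clifford semigroup `(S,∘)`:
it contains all idempotents, is closed under `∘` and under `∘`-inverses, and
contains the center of `(S,∘)`. -/
theorem statement10 {S : Type*} (B : DualWeakBrace S) :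
    (∀ e : S, B.mul e e = e → e ∈ B.Dr) ∧
      (∀ z w : S, z ∈ B.Dr → w ∈ B.Dr → B.mul z w ∈ B.Dr) ∧
      (∀ z : S, z ∈ B.Dr → B.inv z ∈ B.Dr) ∧
      (∀ z : S, (∀ a : S, B.mul z a = B.mul a z) → z ∈ B.Dr) :=
  ⟨fun _ he => B.mem_Dr_of_idem he, fun _ _ hz hw => B.mul_mem_Dr hz hw,
    fun _ hz => B.inv_mem_Dr hz, fun _ hz => B.mem_Dr_of_commute hz⟩
end

section
/- For any skew brace (B, +, ∘), the right distributor D_r(B) = {z ∈ B : (a+b)∘z = a∘z - z + b∘z for all a,b} is a subgroup of the multiplicative group (B, ∘) containing the center of (B, ∘). -/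
/-- For a skew brace, `D_r(B)` is a subgroup of `(B,∘)` containing the center of
`(B,∘)`. -/
theorem statement11 {B : Type*} (Br : SkewBrace B) :
    Br.zero ∈ Br.Dr ∧
      (∀ z w : B, z ∈ Br.Dr → w ∈ Br.Dr → Br.mul z w ∈ Br.Dr) ∧
      (∀ z : B, z ∈ Br.Dr → Br.inv z ∈ Br.Dr) ∧
      (∀ z : B, (∀ a : B, Br.mul z a = Br.mul a z) → z ∈ Br.Dr) := by
  letI : Add B := ⟨Br.add⟩
  letI : Neg B := ⟨Br.neg⟩
  letI : Zero B := ⟨Br.zero⟩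
  letI : AddGroup B := AddGroup.ofLeftAxioms Br.add_assoc Br.zero_add Br.neg_add
  letI : Mul B := ⟨Br.mul⟩
  letI : Inv B := ⟨Br.inv⟩
  letI : One B := ⟨Br.zero⟩
  letI : Group B := Group.ofLeftAxioms Br.mul_assoc Br.zero_mul Br.inv_mul
  have h01 : (0 : B) = (1 : B) := rfl
  have hdist : ∀ a b c : B, a * (b + c) = a * b + -a + a * c := Br.dist
  have hmem : ∀ z : B, z ∈ Br.Dr ↔ ∀ a b : B, (a + b) * z = a * z + -z + b * z :=
    fun _ => Iff.rfl
  refine ⟨?_, ?_, ?_, ?_⟩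
  · rw [hmem]
    intro a b
    show (a + b) * 1 = a * 1 + -(0 : B) + b * 1
    simp
  · intro z w hz hw
    rw [hmem] at hz hw ⊢
    have hneg : (-z) * w = w + -(z * w) + w := by
      have h := hw z (-z)
      rw [add_neg_cancel, h01, one_mul] at h
      have h2 : z * w + (-w + (-z) * w) = w := by rw [← add_assoc, ← h]
      have h3 : -w + (-z) * w = -(z * w) + w := eq_neg_add_iff_add_eq.mpr h2
      calc (-z) * w = w + (-w + (-z) * w) := by simp
        _ = w + (-(z * w) + w) := by rw [h3]
        _ = w + -(z * w) + w := by rw [add_assoc]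
    intro a b
    calc (a + b) * (z * w) = ((a + b) * z) * w := (mul_assoc _ _ _).symm
      _ = (a * z + -z + b * z) * w := by rw [hz a b]
      _ = (a * z + -z) * w + -w + (b * z) * w := hw _ _
      _ = ((a * z) * w + -w + (-z) * w) + -w + (b * z) * w := by rw [hw (a * z) (-z)]
      _ = a * (z * w) + -(z * w) + b * (z * w) := by
          rw [hneg, mul_assoc, mul_assoc]
          simp [add_assoc]
  · intro z hz
    rw [hmem] at hz ⊢
    have hnegz : (-z⁻¹) * z = z + z := by
      have h := hz z⁻¹ (-z⁻¹)
      rw [add_neg_cancel, h01, one_mul, inv_mul_cancel, ← h01, zero_add] at h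
      have : z + z = -(-z) + ((-z) + (-z⁻¹) * z) := by rw [← h]; simp
      rw [neg_neg, ← add_assoc] at this
      simpa using this.symm
    intro a b
    have key : (a * z⁻¹ + -z⁻¹ + b * z⁻¹) * z = a + b := by
      rw [hz (a * z⁻¹ + -z⁻¹) (b * z⁻¹), hz (a * z⁻¹) (-z⁻¹), hnegz,
        mul_assoc, mul_assoc, inv_mul_cancel, mul_one, mul_one]
      simp [add_assoc]
    calc (a + b) * z⁻¹ = ((a * z⁻¹ + -z⁻¹ + b * z⁻¹) * z) * z⁻¹ := by rw [key]
      _ = a * z⁻¹ + -z⁻¹ + b * z⁻¹ := by rw [mul_assoc, mul_inv_cancel, mul_one]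
  · intro z hc
    rw [hmem]
    intro a b
    have hcm : ∀ a : B, z * a = a * z := hc
    rw [← hcm, hdist, hcm, hcm]
end

section
/- For any skew brace (B, +, ∘), the set Fix(B) = {a ∈ B : λ_x(a) = a for all x ∈ B} is contained in the right distributor D_r(B). -/
/-- `Fix(B) = {a : λ_x(a) = a for all x}` is contained in `D_r(B)`. -/
theorem statement14 {B : Type*} (Br : SkewBrace B) (z : B)
    (hfix : ∀ x : B, Br.add (Br.neg x) (Br.mul x z) = z) :
    z ∈ Br.Dr := by
  have hmul : ∀ x : B, Br.mul x z = Br.add x z := by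
    intro x
    have := congrArg (Br.add x) (hfix x)
    rwa [← Br.add_assoc, Br.add_neg, Br.zero_add] at this
  intro a b
  rw [hmul, hmul, hmul, Br.add_assoc (Br.add a z), Br.add_assoc a z,
    ← Br.add_assoc z (Br.neg z), Br.add_neg, Br.zero_add, ← Br.add_assoc]
end

section
/- Let T be a near-truss with ternary heap operation [-,-,-] and multiplication, and fix z ∈ T. Define σ̌_a^z(b) = [ab, az, z]. Then for all a,b,c,d ∈ T: (i) σ̌_a^z([b,c,d]) = [σ̌_a^z(b), σ̌_a^z(c), σ̌_a^z(d)], and (ii) σ̌_a^z ∘ σ̌_b^z = σ̌_{ab}^z. -/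
/-- A near-truss: a heap with an associative multiplication that left-distributes over
the ternary heap operation. -/
structure NearTruss (T : Type*) where
  tern : T → T → T → T
  mul : T → T → T
  tern_assoc : ∀ a b c d e, tern a b (tern c d e) = tern (tern a b c) d e
  tern_idl : ∀ a b, tern a a b = b
  tern_idr : ∀ a b, tern b a a = b
  mul_assoc : ∀ a b c, mul (mul a b) c = mul a (mul b c)
  ldist : ∀ a b c d, mul a (tern b c d) = tern (mul a b) (mul a c) (mul a d)

/-- For a near-truss `T` and `z ∈ T`, with `σ̌_a^z(b) = [ab, az, z]`:
(i) `σ̌_a^z([b,c,d]) = [σ̌_a^z(b), σ̌_a^z(c), σ̌_a^z(d)]`, and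
(ii) `σ̌_a^z ∘ σ̌_b^z = σ̌_{ab}^z`. -/
theorem statement15 {α : Type*} (T : NearTruss α) (z : α) :
    (∀ a b c d : α, T.tern (T.mul a (T.tern b c d)) (T.mul a z) z =
        T.tern (T.tern (T.mul a b) (T.mul a z) z) (T.tern (T.mul a c) (T.mul a z) z)
          (T.tern (T.mul a d) (T.mul a z) z)) ∧
      (∀ a b c : α,
        T.tern (T.mul a (T.tern (T.mul b c) (T.mul b z) z)) (T.mul a z) z =
          T.tern (T.mul (T.mul a b) c) (T.mul (T.mul a b) z) z) := by
  have lem1 : ∀ b c d : α, T.tern (T.tern d c b) b (T.tern c d b) = b := by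
    intro b c d
    rw [← T.tern_assoc, T.tern_idl, T.tern_assoc, T.tern_idr, T.tern_idl]
  have lem2 : ∀ b c d : α, T.tern b (T.tern d c b) b = T.tern c d b := by
    intro b c d
    have h : T.tern b (T.tern d c b)
        (T.tern (T.tern d c b) b (T.tern c d b)) = T.tern c d b := by
      rw [T.tern_assoc, T.tern_idr, T.tern_idl]
    rw [lem1] at h
    exact h
  have key : ∀ b c d e : α, T.tern b (T.tern d c b) e = T.tern c d e := by
    intro b c d e
    calc T.tern b (T.tern d c b) e
        = T.tern b (T.tern d c b)
            (T.tern b (T.tern c d b) (T.tern (T.tern c d b) b e)) := by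
          rw [T.tern_assoc b (T.tern c d b) (T.tern c d b) b e, T.tern_idr (T.tern c d b) b, T.tern_idl]
      _ = T.tern (T.tern b (T.tern d c b) b) (T.tern c d b)
            (T.tern (T.tern c d b) b e) := by rw [T.tern_assoc]
      _ = T.tern (T.tern c d b) (T.tern c d b)
            (T.tern (T.tern c d b) b e) := by rw [lem2]
      _ = T.tern (T.tern c d b) b e := by rw [T.tern_idl]
      _ = T.tern c d (T.tern b b e) := by rw [T.tern_assoc]
      _ = T.tern c d e := by rw [T.tern_idl]
  have midflip : ∀ a b c d e : α,
      T.tern (T.tern a b c) d e = T.tern a (T.tern d c b) e := by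
    intro a b c d e
    rw [← T.tern_assoc, ← key b c d e, T.tern_assoc, T.tern_idr]
  have L1 : ∀ x y w p q : α,
      T.tern (T.tern x p q) (T.tern y p q) (T.tern w p q) =
        T.tern (T.tern x y w) p q := by
    intro x y w p q
    rw [← midflip (T.tern x p q) q p y (T.tern w p q),
      ← T.tern_assoc x p q q p, T.tern_idl q p, T.tern_idr p x,
      T.tern_assoc]
  constructor
  · intro a b c d
    rw [T.ldist, ← L1]
  · intro a b c
    rw [T.ldist, ← T.tern_assoc, T.tern_idl, ← T.mul_assoc a b c,
      ← T.mul_assoc a b z]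
end
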